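/- arXiv:1112.3690 — 9 statements merged into one kernel-verified Lean document; each statement's English description precedes it below -/
import Mathlib

section
/- Let α ∈ (0,2) and ρ ∈ (0,1) with ρ̂ = 1−ρ, αρ < 1 and αρ̂ < 1. For every real θ ≠ 0, writing Ψ^L(θ) = Γ(α−iθ)Γ(1+iθ)/(Γ(αρ̂−iθ)Γ(1−αρ̂+iθ)) − Γ(α)/(Γ(αρ̂)Γ(1−αρ̂)) and Ψ^C(θ) = (Γ(α)/(Γ(αρ̂)Γ(1−αρ̂)))·(1 − (sin(παρ)/(πΓ(α)))·Γ(1−αρ+iθ)Γ(αρ−iθ)Γ(1+iθ)Γ(α−iθ)), one has Ψ^L(θ) + Ψ^C(θ) = (Γ(αρ−iθ)/Γ(−iθ))·(Γ(1−αρ+iθ)/Γ(1−α+iθ)). -/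
/-!
With `a = αρ̂`, `b = αρ` and `s = iθ`, Euler's reflection formula `Γ(z) Γ(1 - z) = π / sin(πz)`
turns every pair of Gamma factors on both sides into a sine, after which both sides equal
`Γ(1 + s) Γ(α - s) / (π sin(π(b - s)))` times, respectively,
`sin(π(a - s)) sin(π(b - s)) - sin(πa) sin(πb)` and `sin(-πs) sin(π(α - s))`;
these agree by the addition formulas since `a + b = α`.
-/

open Complex

open scoped Real

namespace Complex

theorem inv_Gamma_mul_Gamma_one_sub (z : ℂ) :
    (Gamma z * Gamma (1 - z))⁻¹ = sin (π * z) / π := by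
  rw [Gamma_mul_Gamma_one_sub, inv_div]

theorem inv_Gamma_eq_Gamma_one_sub_mul_sin {z : ℂ} (hz : Gamma (1 - z) ≠ 0) :
    (Gamma z)⁻¹ = Gamma (1 - z) * sin (π * z) / π := by
  rw [mul_div_assoc, ← inv_Gamma_mul_Gamma_one_sub, mul_inv_rev, mul_inv_cancel_left₀ hz]

theorem sin_pi_mul_ne_zero_of_im_ne_zero {z : ℂ} (hz : z.im ≠ 0) : sin (π * z) ≠ 0 := by
  rw [sin_ne_zero_iff]
  intro k hk
  apply_fun im at hk
  simp [Real.pi_ne_zero, hz] at hk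

theorem sin_sub_mul_sin_sub_sub_sin_mul_sin (p q t : ℂ) :
    sin (p - t) * sin (q - t) - sin p * sin q = sin (-t) * sin (p + q - t) := by
  simp only [sin_sub, sin_add, sin_neg, cos_add]
  linear_combination (sin p * sin q) * sin_sq_add_cos_sq t

theorem Gamma_reflection_factorisation {a b c s : ℂ} (habc : a + b = c)
    (hs : Gamma (1 + s) ≠ 0) (hcs : Gamma (c - s) ≠ 0) (hbs : sin (π * (b - s)) ≠ 0) :
    Gamma (c - s) * Gamma (1 + s) / (Gamma (a - s) * Gamma (1 - a + s)) -
        sin (π * a) * sin (π * b) / π ^ 2 *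
          (Gamma (1 - b + s) * Gamma (b - s) * Gamma (1 + s) * Gamma (c - s)) =
      Gamma (b - s) / Gamma (-s) * (Gamma (1 - b + s) / Gamma (1 - c + s)) := by
  have ha := inv_Gamma_mul_Gamma_one_sub (a - s)
  have hb := Gamma_mul_Gamma_one_sub (b - s)
  have hneg := inv_Gamma_eq_Gamma_one_sub_mul_sin (z := -s) (by rwa [sub_neg_eq_add])
  have hc := inv_Gamma_eq_Gamma_one_sub_mul_sin (z := 1 - c + s)
    (by rwa [show 1 - (1 - c + s) = c - s by ring])
  rw [show 1 - (a - s) = 1 - a + s by ring] at ha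
  rw [show 1 - (b - s) = 1 - b + s by ring] at hb
  rw [sub_neg_eq_add] at hneg
  rw [show 1 - (1 - c + s) = c - s by ring, show π * (1 - c + s) = π - π * (c - s) by ring,
    sin_pi_sub] at hc
  rw [div_eq_mul_inv _ (Gamma (a - s) * _), ha, mul_comm (Gamma (1 - b + s)), hb,
    div_mul_div_comm, div_eq_mul_inv (Gamma (b - s) * _), mul_inv, hb, hneg, hc]
  have trig := sin_sub_mul_sin_sub_sub_sin_mul_sin (π * a) (π * b) (π * s)
  rw [← mul_sub, ← mul_sub, ← mul_neg, ← mul_add, ← mul_sub, habc] at trig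
  field_simp
  linear_combination (norm := ring_nf) trig

end Complex

theorem characteristic_exponent_factorisation_general
    (α ρ : ℝ) (hα : α ∈ Set.Ioo (0:ℝ) 2)
    (θ : ℝ) (hθ : θ ≠ 0) :
    (Complex.Gamma (α - I * θ) * Complex.Gamma (1 + I * θ) /
        (Complex.Gamma (α * (1 - ρ) - I * θ) * Complex.Gamma (1 - α * (1 - ρ) + I * θ)) -
      Complex.Gamma α / (Complex.Gamma (α * (1 - ρ)) * Complex.Gamma (1 - α * (1 - ρ)))) +
    Complex.Gamma α / (Complex.Gamma (α * (1 - ρ)) * Complex.Gamma (1 - α * (1 - ρ))) *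
      (1 - Real.sin (Real.pi * α * ρ) / (Real.pi * Complex.Gamma α) *
        (Complex.Gamma (1 - α * ρ + I * θ) * Complex.Gamma (α * ρ - I * θ) *
          Complex.Gamma (1 + I * θ) * Complex.Gamma (α - I * θ))) =
    Complex.Gamma (α * ρ - I * θ) / Complex.Gamma (-(I * θ)) *
      (Complex.Gamma (1 - α * ρ + I * θ) / Complex.Gamma (1 - α + I * θ)) := by
  have hΓα : Gamma α ≠ 0 := Gamma_ne_zero_of_re_pos (by simpa using hα.1)
  have hsin : (Real.sin (π * α * ρ) : ℂ) = sin (π * (α * ρ)) := by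
    push_cast; ring_nf
  rw [← Gamma_reflection_factorisation (a := α * (1 - ρ)) (by ring)
    (Gamma_ne_zero_of_re_pos (by simp)) (Gamma_ne_zero_of_re_pos (by simpa using hα.1))
    (sin_pi_mul_ne_zero_of_im_ne_zero (by simpa using hθ)), hsin,
    div_eq_mul_inv (Gamma α), inv_Gamma_mul_Gamma_one_sub]
  field_simp
  ring

theorem characteristic_exponent_factorisation
    (α ρ : ℝ) (hα : α ∈ Set.Ioo (0:ℝ) 2) (hρ : ρ ∈ Set.Ioo (0:ℝ) 1)
    (h1 : α * ρ < 1) (h2 : α * (1 - ρ) < 1) (θ : ℝ) (hθ : θ ≠ 0) :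
    (Complex.Gamma (α - I * θ) * Complex.Gamma (1 + I * θ) /
        (Complex.Gamma (α * (1 - ρ) - I * θ) * Complex.Gamma (1 - α * (1 - ρ) + I * θ)) -
      Complex.Gamma α / (Complex.Gamma (α * (1 - ρ)) * Complex.Gamma (1 - α * (1 - ρ)))) +
    Complex.Gamma α / (Complex.Gamma (α * (1 - ρ)) * Complex.Gamma (1 - α * (1 - ρ))) *
      (1 - Real.sin (Real.pi * α * ρ) / (Real.pi * Complex.Gamma α) *
        (Complex.Gamma (1 - α * ρ + I * θ) * Complex.Gamma (α * ρ - I * θ) *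
          Complex.Gamma (1 + I * θ) * Complex.Gamma (α - I * θ))) =
    Complex.Gamma (α * ρ - I * θ) / Complex.Gamma (-(I * θ)) *
      (Complex.Gamma (1 - α * ρ + I * θ) / Complex.Gamma (1 - α + I * θ)) :=
  characteristic_exponent_factorisation_general α ρ hα θ hθ
end

section
/- For every real α > 0 and every real θ, the Lebesgue integral ∫_{−∞}^{∞} e^{iθx} · α e^{x} (1+e^{x})^{−(α+1)} dx equals Γ(1+iθ)·Γ(α−iθ)/Γ(α). -/
/-!
Substituting `t = eˣ` turns the integral into `α ∫₀^∞ t^{iθ} (1 + t)^{-(α+1)} dt`, and the further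
substitution `t = x / (1 - x)` identifies `∫₀^∞ t^{s-1} (1 + t)^{-(s+u)} dt` with the Beta integral
`B(s, u)`. For `s = 1 + iθ`, `u = α - iθ` this gives
`α B(s, u) = α Γ(s) Γ(u) / Γ(α + 1) = Γ(s) Γ(u) / Γ(α)`.
-/

open Complex MeasureTheory Set

theorem integral_exp_smul_comp_exp {E : Type*} [NormedAddCommGroup E] [NormedSpace ℝ E]
    (g : ℝ → E) : ∫ x, Real.exp x • g (Real.exp x) = ∫ y in Ioi 0, g y := by
  rw [← Real.range_exp, ← image_univ, integral_image_eq_integral_abs_deriv_smul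
    MeasurableSet.univ (fun x _ => (Real.hasDerivAt_exp x).hasDerivWithinAt)
    Real.exp_injective.injOn, setIntegral_univ]
  simp only [abs_of_pos (Real.exp_pos _)]

lemma Complex.ofReal_cpow_eq_exp_mul_log {x : ℝ} (hx : 0 < x) (s : ℂ) :
    (x : ℂ) ^ s = exp (s * Real.log x) := by
  rw [cpow_def_of_ne_zero (ofReal_ne_zero.mpr hx.ne'), ofReal_log hx.le, mul_comm]

lemma image_div_one_sub_Ioo : (fun x : ℝ => x / (1 - x)) '' Ioo 0 1 = Ioi 0 := by
  ext t
  constructor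
  · rintro ⟨x, ⟨hx0, hx1⟩, rfl⟩
    exact div_pos hx0 (sub_pos.mpr hx1)
  · intro (ht : 0 < t)
    refine ⟨t / (1 + t), ⟨by positivity, (div_lt_one (by positivity)).mpr (by linarith)⟩, ?_⟩
    field_simp
    ring

lemma injOn_div_one_sub_Ioo : InjOn (fun x : ℝ => x / (1 - x)) (Ioo 0 1) := by
  intro x ⟨_, hx⟩ y ⟨_, hy⟩ hxy
  have : x * (1 - y) = y * (1 - x) := by
    rwa [div_eq_div_iff (sub_ne_zero.mpr hx.ne') (sub_ne_zero.mpr hy.ne')] at hxy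
  linarith

lemma hasDerivAt_div_one_sub {x : ℝ} (hx : x ≠ 1) :
    HasDerivAt (fun x : ℝ => x / (1 - x)) ((1 - x) ^ 2)⁻¹ x := by
  have hquot := (hasDerivAt_id x).div ((hasDerivAt_const x 1).sub (hasDerivAt_id x))
    (sub_ne_zero.mpr hx.symm)
  exact hquot.congr_deriv (by simp only [Pi.sub_apply, id]; ring)

/-- No convergence hypothesis is needed: the change of variables formula holds for arbitrary
integrands, so both sides are simultaneously the junk value `0` when the integrals diverge. -/
theorem Complex.integral_Ioi_cpow_mul_one_add_cpow_eq_betaIntegral (u v : ℂ) :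
    ∫ t in Ioi (0 : ℝ), (t : ℂ) ^ (u - 1) * (1 + (t : ℂ)) ^ (-(u + v)) = betaIntegral u v := by
  rw [← image_div_one_sub_Ioo, integral_image_eq_integral_abs_deriv_smul measurableSet_Ioo
    (fun x hx => (hasDerivAt_div_one_sub hx.2.ne).hasDerivWithinAt) injOn_div_one_sub_Ioo,
    betaIntegral, intervalIntegral.integral_of_le zero_le_one, integral_Ioc_eq_integral_Ioo]
  refine setIntegral_congr_fun measurableSet_Ioo fun x ⟨hx0, hx1⟩ => ?_
  have h1x : 0 < 1 - x := sub_pos.mpr hx1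
  have hjac : ((((1 - x) ^ 2)⁻¹ : ℝ) : ℂ) = exp (-2 * Real.log (1 - x)) := by
    rw [← Real.rpow_two, ← Real.rpow_neg h1x.le, Real.rpow_def_of_pos h1x, ofReal_exp]
    push_cast
    ring_nf
  have hbase : (1 : ℂ) + ((x / (1 - x) : ℝ) : ℂ) = (((1 - x)⁻¹ : ℝ) : ℂ) := by
    have h1x' : (1 : ℂ) - x ≠ 0 := by exact_mod_cast h1x.ne'
    push_cast
    field_simp
    ring
  have hcompl : (1 : ℂ) - x = ((1 - x : ℝ) : ℂ) := by push_cast; rfl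
  -- all bases are positive reals, so every factor is the exponential of a combination of
  -- `log x` and `log (1 - x)`
  rw [real_smul, abs_of_pos (by positivity), hjac, hbase, hcompl,
    ofReal_cpow_eq_exp_mul_log (div_pos hx0 h1x), ofReal_cpow_eq_exp_mul_log (inv_pos.mpr h1x),
    ofReal_cpow_eq_exp_mul_log hx0, ofReal_cpow_eq_exp_mul_log h1x, ← exp_add, ← exp_add,
    ← exp_add, Real.log_div hx0.ne' h1x.ne', Real.log_inv]
  push_cast
  ring_nf

theorem fourier_transform_first_factor (α : ℝ) (hα : 0 < α) (θ : ℝ) :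
    ∫ x : ℝ, Complex.exp (I * θ * x) *
        ((α * Real.exp x * (1 + Real.exp x) ^ (-(α + 1)) : ℝ) : ℂ) =
      Complex.Gamma (1 + I * θ) * Complex.Gamma (α - I * θ) / Complex.Gamma α := by
  set s : ℂ := 1 + I * θ
  set u : ℂ := α - I * θ
  have hsu : s + u = α + 1 := by ring
  set g : ℝ → ℂ := fun t => α * ((t : ℂ) ^ (s - 1) * (1 + (t : ℂ)) ^ (-(s + u)))
  have hintegrand (x : ℝ) : exp (I * θ * x) *
      ((α * Real.exp x * (1 + Real.exp x) ^ (-(α + 1)) : ℝ) : ℂ) = Real.exp x • g (Real.exp x) := by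
    simp only [g]
    rw [show s - 1 = I * θ by ring, hsu, ofReal_cpow_eq_exp_mul_log (Real.exp_pos x), Real.log_exp,
      ofReal_mul, ofReal_mul, ofReal_cpow (by positivity), real_smul]
    push_cast
    ring
  have hα' : (α : ℂ) ≠ 0 := ofReal_ne_zero.mpr hα.ne'
  simp_rw [hintegrand]
  rw [integral_exp_smul_comp_exp, integral_const_mul,
    integral_Ioi_cpow_mul_one_add_cpow_eq_betaIntegral,
    betaIntegral_eq_Gamma_mul_div s u (by simp [s]) (by simp [u, hα]), hsu,
    Gamma_add_one _ hα']
  field_simp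
end

section
/- Let α ∈ (0,2), ρ ∈ (0,1), ρ̂ = 1−ρ, and assume αρ ∈ (0,1) and αρ̂ ∈ (0,1). For every real θ, the iterated integral ∫_0^1 ∫_y^∞ ∫_0^∞ u^{iθ} v^{−iθ} (1−y)^{αρ̂−1} (v−y)^{αρ−1} (v+u)^{−(1+α)} du dv dy, multiplied by (sin(παρ̂)/π)·(Γ(α+1)/(Γ(αρ)Γ(αρ̂))), equals Γ(1+iθ)·Γ(α−iθ)/Γ(α). -/
/-!
Each of the three integrals is a Beta integral. The substitution `u = v x / (1 - x)` turns
`∫₀^∞ u^(a-1) (v + u)^(-(a+b)) du` into `v^(-b) B(a, b)`; with `a = 1 + iθ`, `b = α - iθ` this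
removes `u` and leaves `v^(-α)`. Shifting `v` by `y` gives `y^(-αρ̂) B(αρ, αρ̂)`, and the last
integral is `B(1 - αρ̂, αρ̂) = π / sin(π αρ̂)` by the reflection formula. Every integral is
evaluated in closed form as it stands, so no Fubini argument is needed.
-/

open Complex MeasureTheory Set

theorem integral_Ioi_eq_integral_Ioi_zero_add {E : Type*} [NormedAddCommGroup E]
    [NormedSpace ℝ E] (f : ℝ → E) (y : ℝ) :
    ∫ v in Ioi y, f v = ∫ w in Ioi (0:ℝ), f (y + w) := by
  rw [← (measurePreserving_add_left volume y).setIntegral_preimage_emb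
    (measurableEmbedding_addLeft y)]
  simp [preimage_const_add_Ioi]

section Substitution

variable {c : ℝ}

theorem image_mul_div_one_sub_Ioo (hc : 0 < c) :
    (fun x => c * x / (1 - x)) '' Ioo 0 1 = Ioi 0 := by
  ext u
  constructor
  · rintro ⟨x, hx, rfl⟩
    exact div_pos (mul_pos hc hx.1) (sub_pos.mpr hx.2)
  · intro (hu : 0 < u)
    refine ⟨u / (c + u), ⟨by positivity, (div_lt_one (by positivity)).mpr (by linarith)⟩, ?_⟩
    have hcu : c + u ≠ 0 := by positivity
    show c * (u / (c + u)) / (1 - u / (c + u)) = u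
    rw [one_sub_div hcu, add_sub_cancel_right]
    field_simp

theorem injOn_mul_div_one_sub (hc : c ≠ 0) :
    InjOn (fun x => c * x / (1 - x)) (Ioo 0 1) := by
  intro x hx x' hx' h
  have h1 : 1 - x ≠ 0 := (sub_pos.mpr hx.2).ne'
  have h1' : 1 - x' ≠ 0 := (sub_pos.mpr hx'.2).ne'
  field_simp at h
  linarith

theorem hasDerivAt_mul_div_one_sub {x : ℝ} (hx : x ≠ 1) :
    HasDerivAt (fun x => c * x / (1 - x)) (c / (1 - x) ^ 2) x := by
  have hnum : HasDerivAt (fun x => c * x) c x := by simpa using (hasDerivAt_id x).const_mul c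
  have hden : HasDerivAt (fun x => 1 - x) (-1) x := by
    simpa using (hasDerivAt_id x).const_sub 1
  have := hnum.div hden (sub_ne_zero.mpr hx.symm)
  rwa [show (c * (1 - x) - c * x * -1) / (1 - x) ^ 2 = c / (1 - x) ^ 2 by ring] at this

end Substitution

namespace Complex

theorem integral_Ioo_cpow_mul_one_sub_cpow {a b : ℂ} (ha : 0 < a.re) (hb : 0 < b.re) :
    ∫ x in Ioo (0:ℝ) 1, (x : ℂ) ^ (a - 1) * ((1 - x : ℝ) : ℂ) ^ (b - 1) =
      Gamma a * Gamma b / Gamma (a + b) := by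
  rw [← betaIntegral_eq_Gamma_mul_div a b ha hb, betaIntegral,
    intervalIntegral.integral_of_le zero_le_one, integral_Ioc_eq_integral_Ioo]
  push_cast
  rfl

theorem ofReal_cpow_eq_exp {r : ℝ} (hr : 0 < r) (s : ℂ) :
    (r : ℂ) ^ s = exp (s * Real.log r) := by
  rw [cpow_def_of_ne_zero (ofReal_ne_zero.mpr hr.ne'), ← ofReal_log hr.le, mul_comm]

theorem integral_Ioi_cpow_mul_add_cpow {a b : ℂ} (ha : 0 < a.re) (hb : 0 < b.re) {c : ℝ}
    (hc : 0 < c) :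
    ∫ u in Ioi (0:ℝ), (u : ℂ) ^ (a - 1) * ((c + u : ℝ) : ℂ) ^ (-(a + b)) =
      (c : ℂ) ^ (-b) * (Gamma a * Gamma b / Gamma (a + b)) := by
  rw [← image_mul_div_one_sub_Ioo hc,
    integral_image_eq_integral_abs_deriv_smul measurableSet_Ioo
      (fun x hx => (hasDerivAt_mul_div_one_sub hx.2.ne).hasDerivWithinAt)
      (injOn_mul_div_one_sub hc.ne'),
    ← integral_Ioo_cpow_mul_one_sub_cpow ha hb, ← integral_const_mul]
  refine setIntegral_congr_fun measurableSet_Ioo fun x ⟨hx0, hx1⟩ => ?_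
  have h1x : 0 < 1 - x := sub_pos.mpr hx1
  have hsum : c + c * x / (1 - x) = c / (1 - x) := by field_simp; ring
  rw [abs_of_pos (by positivity), real_smul, hsum, ← exp_log (ofReal_ne_zero.mpr (by positivity)),
    ofReal_cpow_eq_exp (by positivity), ofReal_cpow_eq_exp (by positivity),
    ofReal_cpow_eq_exp hc, ofReal_cpow_eq_exp hx0, ofReal_cpow_eq_exp h1x,
    ← exp_add, ← exp_add, ← exp_add, ← exp_add, ← ofReal_log (by positivity)]
  congr 1
  rw [Real.log_div (by positivity) (by positivity), Real.log_div (by positivity) h1x.ne',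
    Real.log_div hc.ne' h1x.ne', Real.log_mul hc.ne' hx0.ne', Real.log_pow]
  push_cast
  ring

theorem integral_Ioi_sub_cpow_mul_cpow {a b : ℂ} (ha : 0 < a.re) (hb : 0 < b.re) {y : ℝ}
    (hy : 0 < y) :
    ∫ v in Ioi y, ((v - y : ℝ) : ℂ) ^ (a - 1) * (v : ℂ) ^ (-(a + b)) =
      (y : ℂ) ^ (-b) * (Gamma a * Gamma b / Gamma (a + b)) := by
  rw [integral_Ioi_eq_integral_Ioi_zero_add, ← integral_Ioi_cpow_mul_add_cpow ha hb hy]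
  simp only [add_sub_cancel_left]

end Complex

section TripleIntegral

variable {α r s : ℝ} (θ : ℝ)

theorem integral_Ioi_cpow_I_mul_mul_add_rpow (hα : 0 < α) (K : ℝ) {v : ℝ} (hv : 0 < v) :
    ∫ u in Ioi (0:ℝ), (u : ℂ) ^ (I * θ) * (v : ℂ) ^ (-(I * θ)) *
        ((K * (v + u) ^ (-(1 + α)) : ℝ) : ℂ) =
      K * (v : ℂ) ^ (-(α : ℂ)) *
        (Gamma (1 + I * θ) * Gamma (α - I * θ) / Gamma (α + 1)) := by
  have hintegrand : ∀ u ∈ Ioi (0:ℝ), (u : ℂ) ^ (I * θ) * (v : ℂ) ^ (-(I * θ)) *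
        ((K * (v + u) ^ (-(1 + α)) : ℝ) : ℂ) =
      ((v : ℂ) ^ (-(I * θ)) * K) * ((u : ℂ) ^ ((1 + I * θ) - 1) *
        ((v + u : ℝ) : ℂ) ^ (-((1 + I * θ) + (α - I * θ)))) := fun u (hu : 0 < u) => by
    rw [ofReal_mul, ofReal_cpow (by positivity)]
    push_cast
    ring_nf
  have hpow : (v : ℂ) ^ (-(I * θ)) * (v : ℂ) ^ (-(α - I * θ)) = (v : ℂ) ^ (-(α : ℂ)) := by
    rw [← cpow_add _ _ (ofReal_ne_zero.mpr hv.ne')]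
    ring_nf
  rw [setIntegral_congr_fun measurableSet_Ioi hintegrand, integral_const_mul,
    integral_Ioi_cpow_mul_add_cpow (by simp) (by simpa using hα) hv,
    show (1 + I * θ) + (α - I * θ) = α + 1 by ring, ← hpow]
  ring

theorem integral_Ioi_sub_rpow_mul_cpow (hr : 0 < r) (hs : 0 < s) (hrs : r + s = α) (K : ℝ)
    (C : ℂ) {y : ℝ} (hy : 0 < y) :
    ∫ v in Ioi y, ((K * (v - y) ^ (r - 1) : ℝ) : ℂ) * (v : ℂ) ^ (-(α : ℂ)) * C =
      K * (y : ℂ) ^ (-(s : ℂ)) * (Gamma r * Gamma s / Gamma α * C) := by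
  subst hrs
  have hintegrand : ∀ v ∈ Ioi y,
      ((K * (v - y) ^ (r - 1) : ℝ) : ℂ) * (v : ℂ) ^ (-((r + s : ℝ) : ℂ)) * C =
      (K * C) * (((v - y : ℝ) : ℂ) ^ ((r : ℂ) - 1) * (v : ℂ) ^ (-((r : ℂ) + s))) :=
    fun v (hv : y < v) => by
      rw [ofReal_mul, ofReal_cpow (sub_nonneg.mpr hv.le)]
      push_cast
      ring
  rw [setIntegral_congr_fun measurableSet_Ioi hintegrand, integral_const_mul,
    integral_Ioi_sub_cpow_mul_cpow (by simpa) (by simpa) hy]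
  push_cast
  ring

theorem integral_Ioo_one_sub_rpow_mul_cpow (hs : s ∈ Ioo 0 1) (C : ℂ) :
    ∫ y in Ioo (0:ℝ) 1, (((1 - y) ^ (s - 1) : ℝ) : ℂ) * (y : ℂ) ^ (-(s : ℂ)) * C =
      ((Real.pi / Real.sin (Real.pi * s) : ℝ) : ℂ) * C := by
  have hintegrand : ∀ y ∈ Ioo (0:ℝ) 1,
      (((1 - y) ^ (s - 1) : ℝ) : ℂ) * (y : ℂ) ^ (-(s : ℂ)) * C =
      C * ((y : ℂ) ^ ((1 - (s : ℂ)) - 1) * ((1 - y : ℝ) : ℂ) ^ ((s : ℂ) - 1)) := fun y hy => by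
    rw [ofReal_cpow (sub_pos.mpr hy.2).le]
    push_cast
    ring_nf
  rw [setIntegral_congr_fun measurableSet_Ioo hintegrand, integral_const_mul,
    integral_Ioo_cpow_mul_one_sub_cpow (by simpa using hs.2) (by simpa using hs.1), sub_add_cancel,
    Gamma_one, div_one, mul_comm (Gamma _), Gamma_mul_Gamma_one_sub]
  push_cast
  ring

theorem iteratedIntegral_eq_Gamma_mul (hr : 0 < r) (hs : s ∈ Ioo 0 1) (hrs : r + s = α) :
    ∫ y in Ioo (0:ℝ) 1, ∫ v in Ioi y, ∫ u in Ioi (0:ℝ),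
        (u : ℂ) ^ (I * θ) * (v : ℂ) ^ (-(I * θ)) *
          (((1 - y) ^ (s - 1) * (v - y) ^ (r - 1) * (v + u) ^ (-(1 + α)) : ℝ) : ℂ) =
      ((Real.pi / Real.sin (Real.pi * s) : ℝ) : ℂ) * (Gamma r * Gamma s / Gamma α *
        (Gamma (1 + I * θ) * Gamma (α - I * θ) / Gamma (α + 1))) := by
  have hα : 0 < α := by linarith [hs.1]
  calc _ = ∫ y in Ioo (0:ℝ) 1, ∫ v in Ioi y,
          (((1 - y) ^ (s - 1) * (v - y) ^ (r - 1) : ℝ) : ℂ) * (v : ℂ) ^ (-(α : ℂ)) *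
            (Gamma (1 + I * θ) * Gamma (α - I * θ) / Gamma (α + 1)) :=
        setIntegral_congr_fun measurableSet_Ioo fun y hy =>
          setIntegral_congr_fun measurableSet_Ioi fun v hv =>
            integral_Ioi_cpow_I_mul_mul_add_rpow θ hα _ (hy.1.trans hv)
    _ = ∫ y in Ioo (0:ℝ) 1, (((1 - y) ^ (s - 1) : ℝ) : ℂ) * (y : ℂ) ^ (-(s : ℂ)) *
          (Gamma r * Gamma s / Gamma α *
            (Gamma (1 + I * θ) * Gamma (α - I * θ) / Gamma (α + 1))) :=
        setIntegral_congr_fun measurableSet_Ioo fun y hy =>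
          integral_Ioi_sub_rpow_mul_cpow hr hs.1 hrs _ _ hy.1
    _ = _ := integral_Ioo_one_sub_rpow_mul_cpow hs _

end TripleIntegral

theorem triple_integral_characteristic_function_general
    (α ρ : ℝ) (h1 : α * ρ ∈ Set.Ioo (0:ℝ) 1) (h2 : α * (1 - ρ) ∈ Set.Ioo (0:ℝ) 1) (θ : ℝ) :
    (Real.sin (Real.pi * α * (1 - ρ)) / Real.pi) *
      (Complex.Gamma (α + 1) / (Complex.Gamma (α * ρ) * Complex.Gamma (α * (1 - ρ)))) *
      ∫ y in Set.Ioo (0:ℝ) 1, ∫ v in Set.Ioi y, ∫ u in Set.Ioi (0:ℝ),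
        (u : ℂ) ^ (I * θ) * (v : ℂ) ^ (-(I * θ)) *
          (((1 - y) ^ (α * (1 - ρ) - 1) * (v - y) ^ (α * ρ - 1) *
              (v + u) ^ (-(1 + α)) : ℝ) : ℂ) =
    Complex.Gamma (1 + I * θ) * Complex.Gamma (α - I * θ) / Complex.Gamma α := by
  have hα : 0 < α := by linarith [h1.1, h2.1]
  have hsin : Complex.sin (Real.pi * α * (1 - ρ)) ≠ 0 := by
    have := Real.sin_pos_of_pos_of_lt_pi (x := Real.pi * (α * (1 - ρ)))
      (by nlinarith [Real.pi_pos, h2.1]) (by nlinarith [Real.pi_pos, h2.2])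
    rw [← mul_assoc] at this
    exact_mod_cast this.ne'
  have hΓα := Gamma_ne_zero_of_re_pos (s := α) (by simpa)
  have hΓα₁ := Gamma_ne_zero_of_re_pos (s := α + 1) (by rw [add_re, ofReal_re, one_re]; linarith)
  have hΓr := Gamma_ne_zero_of_re_pos (s := α * ρ) (by simpa using h1.1)
  have hΓs := Gamma_ne_zero_of_re_pos (s := α * (1 - ρ)) (by simpa using h2.1)
  rw [iteratedIntegral_eq_Gamma_mul θ h1.1 h2 (by ring), ← mul_assoc Real.pi]
  push_cast
  field_simp

theorem triple_integral_characteristic_function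
    (α ρ : ℝ) (hα : α ∈ Set.Ioo (0:ℝ) 2) (hρ : ρ ∈ Set.Ioo (0:ℝ) 1)
    (h1 : α * ρ ∈ Set.Ioo (0:ℝ) 1) (h2 : α * (1 - ρ) ∈ Set.Ioo (0:ℝ) 1) (θ : ℝ) :
    (Real.sin (Real.pi * α * (1 - ρ)) / Real.pi) *
      (Complex.Gamma (α + 1) / (Complex.Gamma (α * ρ) * Complex.Gamma (α * (1 - ρ)))) *
      ∫ y in Set.Ioo (0:ℝ) 1, ∫ v in Set.Ioi y, ∫ u in Set.Ioi (0:ℝ),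
        (u : ℂ) ^ (I * θ) * (v : ℂ) ^ (-(I * θ)) *
          (((1 - y) ^ (α * (1 - ρ) - 1) * (v - y) ^ (α * ρ - 1) *
              (v + u) ^ (-(1 + α)) : ℝ) : ℂ) =
    Complex.Gamma (1 + I * θ) * Complex.Gamma (α - I * θ) / Complex.Gamma α :=
  triple_integral_characteristic_function_general α ρ h1 h2 θ
end

section
/- Let α ∈ (0,2), ρ ∈ (0,1), ρ̂ = 1−ρ with αρ̂ ∈ (0,1), and let a < 0 and w < a. Then αρ̂ · e^{−αw} ∫_0^{1−e^{a}} t^{αρ̂−1} (e^{−w} − 1 − e^{−w} t)^{−αρ̂−1} dt = (1−e^{a})^{αρ̂} · e^{(1−αρ)w} · (1−e^{w})^{−1} · (e^{a}−e^{w})^{−αρ̂}. -/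
/-! Substituting `A = e^{-w} - 1 = e^{-w}(1 - e^w)` and `B = e^{-w}`, the integrand is
`t^(β-1) (A - B t)^(-β-1)` with `β = α(1-ρ)`, which has the elementary antiderivative
`t^β (A - B t)^(-β) / (β A)`; evaluating it at `1 - e^a`, where `A - B(1 - e^a) = e^{-w}(e^a - e^w)`,
and collecting the exponentials gives the right-hand side. -/

open MeasureTheory Real Set

theorem hasDerivAt_rpow_mul_affine_rpow_neg {β A B t : ℝ} (ht : t ≠ 0) (hAt : A - B * t ≠ 0) :
    HasDerivAt (fun t => t ^ β * (A - B * t) ^ (-β))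
      (β * A * (t ^ (β - 1) * (A - B * t) ^ (-β - 1))) t := by
  have hlin : HasDerivAt (fun t => A - B * t) (-B) t := by
    simpa using ((hasDerivAt_id t).const_mul B).const_sub A
  have hprod := (hasDerivAt_rpow_const (p := β) (Or.inl ht)).mul
    ((hasDerivAt_rpow_const (p := -β) (Or.inl hAt)).comp t hlin)
  refine hprod.congr_deriv ?_
  have ht_pow : t ^ β = t ^ (β - 1) * t := by rw [← rpow_add_one ht, sub_add_cancel]
  have hAt_pow : (A - B * t) ^ (-β) = (A - B * t) ^ (-β - 1) * (A - B * t) := by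
    rw [← rpow_add_one hAt, sub_add_cancel]
  simp only [Function.comp_apply]
  rw [ht_pow, hAt_pow]
  ring

theorem integral_rpow_sub_one_mul_affine_rpow_neg_sub_one {β A B c : ℝ} (hβ : 0 < β)
    (hc : 0 ≤ c) (hA : 0 < A) (hAc : 0 < A - B * c) :
    ∫ t in (0:ℝ)..c, t ^ (β - 1) * (A - B * t) ^ (-β - 1) =
      c ^ β * (A - B * c) ^ (-β) / (β * A) := by
  -- an affine function positive at both endpoints is positive in between
  have hpos : ∀ t ∈ Icc 0 c, 0 < A - B * t := by
    rintro t ⟨ht0, htc⟩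
    rcases le_total 0 B with hB | hB <;> nlinarith
  have haffine : ContinuousOn (fun t => (A - B * t)) (Icc 0 c) := by fun_prop
  have hderiv : ∀ t ∈ Ioo 0 c, HasDerivAt (fun t => t ^ β * (A - B * t) ^ (-β) / (β * A))
      (t ^ (β - 1) * (A - B * t) ^ (-β - 1)) t := fun t ht =>
    ((hasDerivAt_rpow_mul_affine_rpow_neg ht.1.ne' (hpos t (Ioo_subset_Icc_self ht)).ne').div_const
      (β * A)).congr_deriv (by field_simp)
  have hcont : ContinuousOn (fun t => t ^ β * (A - B * t) ^ (-β) / (β * A)) (Icc 0 c) :=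
    ((continuousOn_id.rpow_const fun _ _ => Or.inr hβ.le).mul
      (haffine.rpow_const fun t ht => Or.inl (hpos t ht).ne')).div_const _
  have hint : IntervalIntegrable (fun t => t ^ (β - 1) * (A - B * t) ^ (-β - 1)) volume 0 c := by
    refine (intervalIntegral.intervalIntegrable_rpow' (by linarith)).mul_continuousOn ?_
    rw [uIcc_of_le hc]
    exact haffine.rpow_const fun t ht => Or.inl (hpos t ht).ne'
  rw [intervalIntegral.integral_eq_sub_of_hasDerivAt_of_le hc hcont hderiv hint]
  simp [zero_rpow hβ.ne']

theorem first_passage_density_identity_general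
    (α ρ : ℝ)
    (h : α * (1 - ρ) ∈ Set.Ioo (0:ℝ) 1) (a w : ℝ) (ha : a < 0) (hw : w < a) :
    α * (1 - ρ) * Real.exp (-α * w) *
      ∫ t in (0:ℝ)..(1 - Real.exp a),
        t ^ (α * (1 - ρ) - 1) *
          (Real.exp (-w) - 1 - Real.exp (-w) * t) ^ (-(α * (1 - ρ)) - 1) =
    (1 - Real.exp a) ^ (α * (1 - ρ)) * Real.exp ((1 - α * ρ) * w) *
      (1 - Real.exp w)⁻¹ * (Real.exp a - Real.exp w) ^ (-(α * (1 - ρ))) := by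
  set β := α * (1 - ρ) with hβ_def
  have hwa : exp w < exp a := exp_lt_exp.2 hw
  have ha1 : exp a < 1 := exp_lt_one_iff.2 ha
  have hexp_neg_mul : exp (-w) * exp w = 1 := by rw [← exp_add, neg_add_cancel, exp_zero]
  have hA : exp (-w) - 1 = exp (-w) * (1 - exp w) := by linear_combination hexp_neg_mul
  have hAc : exp (-w) - 1 - exp (-w) * (1 - exp a) = exp (-w) * (exp a - exp w) := by
    linear_combination hexp_neg_mul
  rw [integral_rpow_sub_one_mul_affine_rpow_neg_sub_one h.1 (by linarith)
      (by rw [hA]; exact mul_pos (exp_pos _) (by linarith))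
      (by rw [hAc]; exact mul_pos (exp_pos _) (by linarith)),
    hAc, hA, mul_rpow (exp_pos _).le (by linarith), ← exp_mul]
  have hexp_split : exp ((1 - α * ρ) * w) = exp (-α * w) * exp (-w * -β) * exp w := by
    rw [← exp_add, ← exp_add, hβ_def]; ring_nf
  have h1w : 1 - exp w ≠ 0 := by linarith
  have hβ : β ≠ 0 := h.1.ne'
  rw [hexp_split, exp_neg w]
  field_simp

theorem first_passage_density_identity
    (α ρ : ℝ) (hα : α ∈ Set.Ioo (0:ℝ) 2) (hρ : ρ ∈ Set.Ioo (0:ℝ) 1)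
    (h : α * (1 - ρ) ∈ Set.Ioo (0:ℝ) 1) (a w : ℝ) (ha : a < 0) (hw : w < a) :
    α * (1 - ρ) * Real.exp (-α * w) *
      ∫ t in (0:ℝ)..(1 - Real.exp a),
        t ^ (α * (1 - ρ) - 1) *
          (Real.exp (-w) - 1 - Real.exp (-w) * t) ^ (-(α * (1 - ρ)) - 1) =
    (1 - Real.exp a) ^ (α * (1 - ρ)) * Real.exp ((1 - α * ρ) * w) *
      (1 - Real.exp w)⁻¹ * (Real.exp a - Real.exp w) ^ (-(α * (1 - ρ))) :=
  first_passage_density_identity_general α ρ h a w ha hw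
end

section
/- Let α ∈ (0,1], ρ ∈ (0,1), ρ̂ = 1−ρ with αρ ∈ (0,1) and αρ̂ ∈ (0,1), and let 0 < p < w. Then ∫_0^p (1−e^{−z})^{αρ̂−1} e^{−(1−α)z} (1−e^{p−w−z})^{αρ−1} dz = (1−e^{p−w})^{α−1} ∫_0^{(1−e^{−p})/(1−e^{−w})} t^{αρ̂−1} (1−t)^{−α} dt. -/
/-!
With `c = e^{p-w} < 1`, substitute `t = (1 - e^{-z}) / (1 - c e^{-z})`, which increases from `0`
at `z = 0` to `(1 - e^{-p}) / (1 - e^{-w})` at `z = p`. Then `1 - t = (1 - c) e^{-z} / (1 - c e^{-z})`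
and `dt = (1 - c) e^{-z} / (1 - c e^{-z})² dz`, so `t^{αρ̂-1} (1-t)^{-α} dt` is `(1 - c)^{1-α}` times
the left-hand integrand: the powers of `1 - c e^{-z}` add up to `α - αρ̂ - 1 = αρ - 1`.
-/

open MeasureTheory Set Real

noncomputable def expSubst (c z : ℝ) : ℝ :=
  (1 - exp (-z)) / (1 - c * exp (-z))

lemma beta_jacobian_rpow_identity {N D K u : ℝ} (hN : 0 < N) (hD : 0 < D) (hK : 0 < K)
    (hu : 0 < u) (a b : ℝ) :
    K * u / D ^ 2 * ((N / D) ^ (a - 1) * (K * u / D) ^ (-b)) =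
      K ^ (1 - b) * (N ^ (a - 1) * u ^ (1 - b) * D ^ (b - a - 1)) := by
  rw [div_rpow hN.le hD.le, div_rpow (by positivity) hD.le, mul_rpow hK.le hu.le,
    sub_eq_add_neg 1 b, rpow_add hK, rpow_add hu, rpow_one, rpow_one,
    show b - a - 1 = b - (a - 1) - 2 by ring, rpow_sub hD _ 2, rpow_sub hD b, rpow_two,
    rpow_neg hD.le, rpow_neg hK.le, rpow_neg hu.le]
  field_simp

lemma one_sub_mul_exp_neg_pos {c z : ℝ} (hc : c < 1) (hz : 0 ≤ z) : 0 < 1 - c * exp (-z) := by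
  nlinarith [exp_pos (-z), exp_le_one_iff.2 (neg_nonpos.2 hz)]

namespace expSubst

variable {c z : ℝ}

@[simp] lemma apply_zero : expSubst c 0 = 0 := by simp [expSubst]

lemma nonneg (hc : c < 1) (hz : 0 ≤ z) : 0 ≤ expSubst c z :=
  div_nonneg (by simpa using exp_le_one_iff.2 (neg_nonpos.2 hz))
    (one_sub_mul_exp_neg_pos hc hz).le

lemma one_sub (h : 1 - c * exp (-z) ≠ 0) :
    1 - expSubst c z = (1 - c) * exp (-z) / (1 - c * exp (-z)) := by
  rw [expSubst, eq_div_iff h, sub_mul, div_mul_cancel₀ _ h]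
  ring

lemma hasDerivAt (h : 1 - c * exp (-z) ≠ 0) :
    HasDerivAt (expSubst c) ((1 - c) * exp (-z) / (1 - c * exp (-z)) ^ 2) z := by
  have hexp : HasDerivAt (fun z => exp (-z)) (-exp (-z)) z := by
    simpa using (hasDerivAt_neg z).exp
  exact ((hexp.const_sub 1).div ((hexp.const_mul c).const_sub 1) h).congr_deriv (by ring)

lemma deriv_smul_rpow_comp (hc : c < 1) (hz : 0 < z) (a b : ℝ) :
    ((1 - c) * exp (-z) / (1 - c * exp (-z)) ^ 2) •
        (expSubst c z ^ (a - 1) * (1 - expSubst c z) ^ (-b)) =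
      (1 - c) ^ (1 - b) *
        ((1 - exp (-z)) ^ (a - 1) * exp (-(1 - b) * z) * (1 - c * exp (-z)) ^ (b - a - 1)) := by
  have hD := one_sub_mul_exp_neg_pos hc hz.le
  have hN : 0 < 1 - exp (-z) := by simpa using exp_lt_one_iff.2 (neg_lt_zero.2 hz)
  rw [one_sub hD.ne', expSubst, show -(1 - b) * z = -z * (1 - b) by ring, exp_mul,
    smul_eq_mul]
  exact beta_jacobian_rpow_identity hN hD (sub_pos.2 hc) (exp_pos _) a b

theorem integral_change_of_variables (hc : c < 1) {p : ℝ} (hp : 0 ≤ p) (a b : ℝ) :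
    ∫ z in (0:ℝ)..p,
        (1 - exp (-z)) ^ (a - 1) * exp (-(1 - b) * z) * (1 - c * exp (-z)) ^ (b - a - 1) =
      (1 - c) ^ (b - 1) * ∫ t in (0:ℝ)..expSubst c p, t ^ (a - 1) * (1 - t) ^ (-b) := by
  have hderiv : ∀ z, 0 ≤ z → HasDerivAt (expSubst c)
      ((1 - c) * exp (-z) / (1 - c * exp (-z)) ^ 2) z :=
    fun z hz => hasDerivAt (one_sub_mul_exp_neg_pos hc hz).ne'
  have hchange := integral_Icc_deriv_smul_of_deriv_nonneg
    (g := fun t => t ^ (a - 1) * (1 - t) ^ (-b))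
    (fun z hz => (hderiv z hz.1).continuousAt.continuousWithinAt)
    (fun z hz => hderiv z hz.1.le)
    (fun z hz => div_nonneg (mul_nonneg (sub_pos.2 hc).le (exp_pos _).le) (sq_nonneg _)) hp
  rw [apply_zero, integral_Icc_eq_integral_Ioo,
    setIntegral_congr_fun measurableSet_Ioo (fun z hz => deriv_smul_rpow_comp hc hz.1 a b),
    integral_const_mul, ← integral_Icc_eq_integral_Ioo] at hchange
  rw [intervalIntegral.integral_of_le hp, intervalIntegral.integral_of_le (nonneg hc hp),
    ← integral_Icc_eq_integral_Ioc, ← integral_Icc_eq_integral_Ioc, ← hchange, ← mul_assoc,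
    ← rpow_add (sub_pos.2 hc)]
  norm_num

end expSubst

theorem killed_potential_density_above_general
    (α ρ : ℝ) (p w : ℝ) (hp : 0 < p) (hw : p < w) :
    ∫ z in (0:ℝ)..p,
        (1 - Real.exp (-z)) ^ (α * (1 - ρ) - 1) * Real.exp (-(1 - α) * z) *
          (1 - Real.exp (p - w - z)) ^ (α * ρ - 1) =
    (1 - Real.exp (p - w)) ^ (α - 1) *
      ∫ t in (0:ℝ)..((1 - Real.exp (-p)) / (1 - Real.exp (-w))),
        t ^ (α * (1 - ρ) - 1) * (1 - t) ^ (-α) := by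
  have hexp : ∀ z, exp (p - w - z) = exp (p - w) * exp (-z) := fun z => by
    rw [← exp_add]; ring_nf
  have hend : expSubst (exp (p - w)) p = (1 - exp (-p)) / (1 - exp (-w)) := by
    rw [expSubst, ← hexp]; ring_nf
  rw [← hend, ← expSubst.integral_change_of_variables (exp_lt_one_iff.2 (by linarith)) hp.le]
  simp only [hexp, show α * ρ - 1 = α - α * (1 - ρ) - 1 by ring]

theorem killed_potential_density_above
    (α ρ : ℝ) (hα : α ∈ Set.Ioc (0:ℝ) 1) (hρ : ρ ∈ Set.Ioo (0:ℝ) 1)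
    (h1 : α * ρ ∈ Set.Ioo (0:ℝ) 1) (h2 : α * (1 - ρ) ∈ Set.Ioo (0:ℝ) 1)
    (p w : ℝ) (hp : 0 < p) (hw : p < w) :
    ∫ z in (0:ℝ)..p,
        (1 - Real.exp (-z)) ^ (α * (1 - ρ) - 1) * Real.exp (-(1 - α) * z) *
          (1 - Real.exp (p - w - z)) ^ (α * ρ - 1) =
    (1 - Real.exp (p - w)) ^ (α - 1) *
      ∫ t in (0:ℝ)..((1 - Real.exp (-p)) / (1 - Real.exp (-w))),
        t ^ (α * (1 - ρ) - 1) * (1 - t) ^ (-α) :=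
  killed_potential_density_above_general α ρ p w hp hw
end

section
/- Let α ∈ (0,1], ρ ∈ (0,1), ρ̂ = 1−ρ with αρ ∈ (0,1) and αρ̂ ∈ (0,1), and let 0 < w < p. Then ∫_{p−w}^{p} (1−e^{−z})^{αρ̂−1} e^{−(1−α)z} (1−e^{p−w−z})^{αρ−1} dz = (e^{p−w}−1)^{α−1} ∫_0^{(1−e^{−w})/(1−e^{−p})} t^{αρ−1} (1−t)^{−α} dt. -/
open Real Set MeasureTheory intervalIntegral

/-!
With `b = p - w`, substitute `t = (1 - e^{b-z}) / (1 - e^{-z})`. This map increases from `0` at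
`z = b` to `(1 - e^{-w}) / (1 - e^{-p})` at `z = p`, with
`dt = e^{-z} (e^b - 1) / (1 - e^{-z})² dz` and `1 - t = e^{-z} (e^b - 1) / (1 - e^{-z})`,
so that the integrand on the left becomes `(e^b - 1)^{α-1} t^{αρ-1} (1 - t)^{-α} dt`.
Since the substitution is monotone, the change of variables holds as an identity of Bochner
integrals whether or not the integrands are integrable.
-/

lemma rpow_mul_rpow_mul_rpow_eq_of_sub_eq_mul {X Y E C : ℝ} (r s : ℝ) (hX : 0 < X) (hY : 0 < Y)
    (hE : 0 < E) (hC : 0 < C) (h : X - Y = E * C) :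
    X ^ (s - r - 1) * E ^ (1 - s) * Y ^ (r - 1) =
      C ^ (s - 1) * (E * C / X ^ 2 * ((Y / X) ^ (r - 1) * (1 - Y / X) ^ (-s))) := by
  rw [show 1 - Y / X = E * C / X by field_simp; linarith]
  obtain ⟨x, rfl⟩ : ∃ x, exp x = X := ⟨log X, exp_log hX⟩
  obtain ⟨y, rfl⟩ : ∃ y, exp y = Y := ⟨log Y, exp_log hY⟩
  obtain ⟨e, rfl⟩ : ∃ e, exp e = E := ⟨log E, exp_log hE⟩
  obtain ⟨c, rfl⟩ : ∃ c, exp c = C := ⟨log C, exp_log hC⟩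
  simp only [← exp_add, ← exp_sub, ← exp_mul, ← exp_nat_mul, Nat.cast_ofNat, exp_eq_exp]
  ring

noncomputable def expMoebius (a z : ℝ) : ℝ := (1 - a * exp (-z)) / (1 - exp (-z))

noncomputable def expMoebiusDeriv (a z : ℝ) : ℝ := exp (-z) * (a - 1) / (1 - exp (-z)) ^ 2

lemma one_sub_exp_neg_pos {z : ℝ} (hz : 0 < z) : 0 < 1 - exp (-z) := by
  simpa using exp_lt_one_iff.2 (neg_neg_of_pos hz)

lemma hasDerivAt_expMoebius (a : ℝ) {z : ℝ} (hz : 0 < z) :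
    HasDerivAt (expMoebius a) (expMoebiusDeriv a z) z := by
  have hexp : HasDerivAt (fun z ↦ exp (-z)) (-exp (-z)) z := by
    simpa using (hasDerivAt_neg z).exp
  refine (((hexp.const_mul a).const_sub 1).div (hexp.const_sub 1)
    (one_sub_exp_neg_pos hz).ne').congr_deriv ?_
  rw [expMoebiusDeriv]
  ring

lemma expMoebiusDeriv_nonneg {a : ℝ} (ha : 1 ≤ a) (z : ℝ) : 0 ≤ expMoebiusDeriv a z :=
  div_nonneg (mul_nonneg (exp_pos _).le (sub_nonneg.2 ha)) (sq_nonneg _)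

lemma expMoebius_exp_self (b : ℝ) : expMoebius (exp b) b = 0 := by
  simp [expMoebius, ← exp_add]

lemma expMoebius_exp_sub (p w : ℝ) :
    expMoebius (exp (p - w)) p = (1 - exp (-w)) / (1 - exp (-p)) := by
  rw [expMoebius, ← exp_add]
  ring_nf

lemma integrand_eq_expMoebiusDeriv_mul_comp (r s : ℝ) {b z : ℝ} (hb : 0 < b) (hbz : b < z) :
    (1 - exp (-z)) ^ (s - r - 1) * exp (-(1 - s) * z) * (1 - exp (b - z)) ^ (r - 1) =
      (exp b - 1) ^ (s - 1) * (expMoebiusDeriv (exp b) z *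
        (expMoebius (exp b) z ^ (r - 1) * (1 - expMoebius (exp b) z) ^ (-s))) := by
  have hY : 0 < 1 - exp b * exp (-z) := by
    rw [← exp_add, sub_pos, exp_lt_one_iff]
    linarith
  rw [show -(1 - s) * z = -z * (1 - s) by ring, exp_mul, sub_eq_add_neg b, exp_add]
  exact rpow_mul_rpow_mul_rpow_eq_of_sub_eq_mul r s (one_sub_exp_neg_pos (hb.trans hbz)) hY
    (exp_pos _) (sub_pos.2 (one_lt_exp_iff.2 hb)) (by ring)

theorem integral_eq_mul_integral_expMoebius (r s : ℝ) {b p : ℝ} (hb : 0 < b) (hbp : b ≤ p) :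
    ∫ z in b..p, (1 - exp (-z)) ^ (s - r - 1) * exp (-(1 - s) * z) * (1 - exp (b - z)) ^ (r - 1) =
      (exp b - 1) ^ (s - 1) *
        ∫ t in (0 : ℝ)..expMoebius (exp b) p, t ^ (r - 1) * (1 - t) ^ (-s) := by
  have hpos : ∀ z ∈ uIcc b p, 0 < z := fun z hz ↦ hb.trans_le (uIcc_of_le hbp ▸ hz).1
  have hderiv : ∀ z ∈ uIcc b p, HasDerivAt (expMoebius (exp b)) (expMoebiusDeriv (exp b) z) z :=
    fun z hz ↦ hasDerivAt_expMoebius _ (hpos z hz)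
  rw [← expMoebius_exp_self b, ← integral_deriv_smul_comp_of_deriv_nonneg
    (fun z hz ↦ (hderiv z hz).continuousAt.continuousWithinAt)
    (fun z hz ↦ hderiv z (Ioo_subset_Icc_self hz))
    (fun z _ ↦ expMoebiusDeriv_nonneg (one_le_exp hb.le) z),
    ← intervalIntegral.integral_const_mul]
  refine integral_congr_ae (Filter.Eventually.of_forall fun z hz ↦ ?_)
  rw [uIoc_of_le hbp] at hz
  exact integrand_eq_expMoebiusDeriv_mul_comp r s hb hz.1

theorem killed_potential_density_below_general
    (α ρ : ℝ)
    (p w : ℝ) (hw : 0 < w) (hwp : w < p) :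
    ∫ z in (p - w)..p,
        (1 - Real.exp (-z)) ^ (α * (1 - ρ) - 1) * Real.exp (-(1 - α) * z) *
          (1 - Real.exp (p - w - z)) ^ (α * ρ - 1) =
    (Real.exp (p - w) - 1) ^ (α - 1) *
      ∫ t in (0:ℝ)..((1 - Real.exp (-w)) / (1 - Real.exp (-p))),
        t ^ (α * ρ - 1) * (1 - t) ^ (-α) := by
  rw [← expMoebius_exp_sub, mul_one_sub]
  exact integral_eq_mul_integral_expMoebius (α * ρ) α (sub_pos.2 hwp) (by linarith)

theorem killed_potential_density_below
    (α ρ : ℝ) (hα : α ∈ Set.Ioc (0:ℝ) 1) (hρ : ρ ∈ Set.Ioo (0:ℝ) 1)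
    (h1 : α * ρ ∈ Set.Ioo (0:ℝ) 1) (h2 : α * (1 - ρ) ∈ Set.Ioo (0:ℝ) 1)
    (p w : ℝ) (hw : 0 < w) (hwp : w < p) :
    ∫ z in (p - w)..p,
        (1 - Real.exp (-z)) ^ (α * (1 - ρ) - 1) * Real.exp (-(1 - α) * z) *
          (1 - Real.exp (p - w - z)) ^ (α * ρ - 1) =
    (Real.exp (p - w) - 1) ^ (α - 1) *
      ∫ t in (0:ℝ)..((1 - Real.exp (-w)) / (1 - Real.exp (-p))),
        t ^ (α * ρ - 1) * (1 - t) ^ (-α) :=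
  killed_potential_density_below_general α ρ p w hw hwp
end

section
/- Let α ∈ (1,2), x > 1 and y ∈ (−1,1). For ρ ∈ (1−1/α, 1/α) with ρ̂ = 1−ρ, define g_ρ(y) = (sin(παρ̂)/π)·(x−1)^{αρ̂}(x+1)^{αρ−1}(1+y)^{1−αρ}(1−y)^{−αρ̂}(x−y)^{−1} + (1−αρ)·(sin(παρ̂)/π)·2^{α−1}(1+y)^{−αρ}(1−y)^{−αρ̂}·∫_0^{(x−1)/(x+1)} t^{αρ̂−1}(1−t)^{1−α} dt. Then, as ρ → 1/α, g_ρ(y) converges to (sin(π(α−1))/π)·(x−1)^{α−1}(1−y)^{1−α}(x−y)^{−1}. -/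
/-! At `ρ = 1/α` the exponents `αρ - 1` and `1 - αρ` vanish and `αρ̂ = α - 1`, so the first term of
`g_ρ` is continuous in `ρ` with exactly the claimed limit. The second term carries the factor
`1 - αρ → 0`, while its integral stays bounded: for `ρ < 1/α` the integrand exponent `αρ̂ - 1` is at
least `α - 2 > -1`, so `t ^ (α - 2) (1 - t) ^ (1 - α)` is an integrable majorant on `[0, (x-1)/(x+1)]`. -/

open MeasureTheory Filter Set Topology

theorem abs_integral_rpow_mul_le {g : ℝ → ℝ} {a s c : ℝ} (ha : -1 < a) (has : a ≤ s)
    (hc0 : 0 ≤ c) (hc1 : c ≤ 1) (hg : ContinuousOn g (Icc 0 c)) (hg0 : ∀ t ∈ Icc 0 c, 0 ≤ g t) :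
    |∫ t in 0..c, t ^ s * g t| ≤ ∫ t in 0..c, t ^ a * g t := by
  rw [← uIcc_of_le hc0] at hg
  have hint (r : ℝ) (hr : -1 < r) : IntervalIntegrable (fun t => t ^ r * g t) volume 0 c :=
    (intervalIntegral.intervalIntegrable_rpow' hr).mul_continuousOn hg
  rw [abs_of_nonneg (intervalIntegral.integral_nonneg hc0 fun t ht =>
    mul_nonneg (Real.rpow_nonneg ht.1 _) (hg0 t ht))]
  refine intervalIntegral.integral_mono_on_of_le_Ioo hc0 (hint s (ha.trans_le has)) (hint a ha)
    fun t ht => ?_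
  exact mul_le_mul_of_nonneg_right (Real.rpow_le_rpow_of_exponent_ge ht.1 (ht.2.le.trans hc1) has)
    (hg0 t (Ioo_subset_Icc_self ht))

theorem tendsto_hitting_density_first_term {α x y : ℝ} (hα : α ≠ 0) (hx : 1 < x)
    (hy : y ∈ Ioo (-1 : ℝ) 1) :
    Tendsto (fun ρ : ℝ =>
        Real.sin (Real.pi * α * (1 - ρ)) / Real.pi * (x - 1) ^ (α * (1 - ρ)) *
          (x + 1) ^ (α * ρ - 1) * (1 + y) ^ (1 - α * ρ) *
          (1 - y) ^ (-(α * (1 - ρ))) * (x - y)⁻¹)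
      (𝓝 (1/α))
      (𝓝 (Real.sin (Real.pi * (α - 1)) / Real.pi * (x - 1) ^ (α - 1) *
        (1 - y) ^ (1 - α) * (x - y)⁻¹)) := by
  have hx₁ : x - 1 ≠ 0 := by linarith
  have hx₂ : x + 1 ≠ 0 := by linarith
  have hy₁ : 1 + y ≠ 0 := by linarith [hy.1]
  have hy₂ : 1 - y ≠ 0 := by linarith [hy.2]
  have hcont : ContinuousAt (fun ρ : ℝ =>
      Real.sin (Real.pi * α * (1 - ρ)) / Real.pi * (x - 1) ^ (α * (1 - ρ)) *
        (x + 1) ^ (α * ρ - 1) * (1 + y) ^ (1 - α * ρ) *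
        (1 - y) ^ (-(α * (1 - ρ))) * (x - y)⁻¹) (1/α) := by
    fun_prop (disch := assumption)
  have hαρ : α * (1 / α) = 1 := by field_simp
  have hαρ' : α * (1 - 1 / α) = α - 1 := by rw [mul_sub, hαρ, mul_one]
  convert hcont.tendsto using 2
  rw [hαρ, hαρ', mul_assoc Real.pi, hαρ', sub_self, Real.rpow_zero, Real.rpow_zero, neg_sub]
  ring

theorem tendsto_hitting_density_second_coeff_zero {α y : ℝ} (hα : α ≠ 0)
    (hy : y ∈ Ioo (-1 : ℝ) 1) :
    Tendsto (fun ρ : ℝ =>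
        (1 - α * ρ) * (Real.sin (Real.pi * α * (1 - ρ)) / Real.pi) * (2:ℝ) ^ (α - 1) *
          (1 + y) ^ (-(α * ρ)) * (1 - y) ^ (-(α * (1 - ρ))))
      (𝓝 (1/α)) (𝓝 0) := by
  have hy₁ : 1 + y ≠ 0 := by linarith [hy.1]
  have hy₂ : 1 - y ≠ 0 := by linarith [hy.2]
  have hcont : ContinuousAt (fun ρ : ℝ =>
      (1 - α * ρ) * (Real.sin (Real.pi * α * (1 - ρ)) / Real.pi) * (2:ℝ) ^ (α - 1) *
        (1 + y) ^ (-(α * ρ)) * (1 - y) ^ (-(α * (1 - ρ)))) (1/α) := by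
    fun_prop (disch := assumption)
  convert hcont.tendsto using 2
  field_simp
  ring

theorem hitting_density_limit_spectrally_negative
    (α : ℝ) (hα : α ∈ Set.Ioo (1:ℝ) 2) (x : ℝ) (hx : 1 < x)
    (y : ℝ) (hy : y ∈ Set.Ioo (-1:ℝ) 1) :
    Tendsto (fun ρ : ℝ =>
        Real.sin (Real.pi * α * (1 - ρ)) / Real.pi * (x - 1) ^ (α * (1 - ρ)) *
          (x + 1) ^ (α * ρ - 1) * (1 + y) ^ (1 - α * ρ) *
          (1 - y) ^ (-(α * (1 - ρ))) * (x - y)⁻¹ +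
        (1 - α * ρ) * (Real.sin (Real.pi * α * (1 - ρ)) / Real.pi) * (2:ℝ) ^ (α - 1) *
          (1 + y) ^ (-(α * ρ)) * (1 - y) ^ (-(α * (1 - ρ))) *
          ∫ t in (0:ℝ)..((x - 1) / (x + 1)), t ^ (α * (1 - ρ) - 1) * (1 - t) ^ (1 - α))
      (nhdsWithin (1/α) (Set.Ioo (1 - 1/α) (1/α)))
      (nhds (Real.sin (Real.pi * (α - 1)) / Real.pi * (x - 1) ^ (α - 1) *
        (1 - y) ^ (1 - α) * (x - y)⁻¹)) := by
  have hα₀ : 0 < α := by linarith [hα.1]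
  have hc₀ : 0 ≤ (x - 1) / (x + 1) := div_nonneg (by linarith) (by linarith)
  have hc₁ : (x - 1) / (x + 1) < 1 := (div_lt_one (by linarith)).2 (by linarith)
  have hbdd : IsBoundedUnder (· ≤ ·) (𝓝[Ioo (1 - 1/α) (1/α)] (1/α)) fun ρ =>
      ‖∫ t in (0:ℝ)..((x - 1) / (x + 1)), t ^ (α * (1 - ρ) - 1) * (1 - t) ^ (1 - α)‖ := by
    refine ⟨∫ t in (0:ℝ)..((x - 1) / (x + 1)), t ^ (α - 2) * (1 - t) ^ (1 - α),
      eventually_map.2 <| eventually_nhdsWithin_of_forall fun ρ hρ => ?_⟩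
    have hαρ : ρ * α < 1 := (lt_div_iff₀ hα₀).1 hρ.2
    refine abs_integral_rpow_mul_le (a := α - 2) (by linarith [hα.1]) (by nlinarith) hc₀ hc₁.le
      (ContinuousOn.rpow_const (f := fun t => 1 - t) (by fun_prop)
        fun t ht => .inl (by linarith [ht.2]))
      fun t ht => Real.rpow_nonneg (by linarith [ht.2]) _
  simpa using ((tendsto_hitting_density_first_term hα₀.ne' hx hy).mono_left
    nhdsWithin_le_nhds).add <| ((tendsto_hitting_density_second_coeff_zero hα₀.ne' hy).mono_left
      nhdsWithin_le_nhds).zero_mul_isBoundedUnder_le hbdd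
end

section
/- For every a ∈ (0,1) and every λ ≥ 0, (−1/Γ(−a))·∫_0^∞ (1−e^{−λx}) e^{x} (e^{x}−1)^{−(a+1)} dx = Γ(a+λ)/Γ(λ), where for λ = 0 the right-hand side is interpreted as 0 (convention 1/Γ(0) = 0). -/
/-!
For `λ > 0`, integrating by parts against `v = -a⁻¹ (eˣ - 1)^(-a)` turns the integral into
`(λ / a) ∫₀^∞ e^(-λx) (eˣ - 1)^(-a) dx`, and the substitution `t = 1 - e^(-x)` identifies the
latter with the Beta integral `B(1 - a, λ + a) = Γ(1 - a) Γ(λ + a) / Γ(1 + λ)`. The recurrences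
`Γ(1 - a) = -a Γ(-a)` and `Γ(1 + λ) = λ Γ(λ)` then give `Γ(a + λ) / Γ(λ)`. Integrability of the
original integrand follows from `1 - e^(-λx) ≤ max 1 λ · (1 - e^(-x))` (Bernoulli), which bounds it
by `max 1 λ · (eˣ - 1)^(-a)`.
-/

open MeasureTheory Set Real Filter Topology

theorem integral_Ioo_zero_one_eq_integral_Ioi {E : Type*} [NormedAddCommGroup E]
    [NormedSpace ℝ E] (g : ℝ → E) :
    ∫ t in Ioo (0 : ℝ) 1, g t = ∫ x in Ioi (0 : ℝ), exp (-x) • g (1 - exp (-x)) := by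
  have himage : (fun x ↦ 1 - exp (-x)) '' Ioi 0 = Ioo (0 : ℝ) 1 := by
    ext t
    refine ⟨?_, fun ht ↦ ⟨-log (1 - t), ?_, ?_⟩⟩
    · rintro ⟨x, hx, rfl⟩
      have : exp (-x) < 1 := exp_lt_one_iff.mpr (neg_lt_zero.mpr hx)
      exact ⟨by linarith, by linarith [exp_pos (-x)]⟩
    · simpa using log_neg (by linarith [ht.2]) (by linarith [ht.1])
    · simp [exp_log (by linarith [ht.2] : 0 < 1 - t)]
  rw [← himage, integral_image_eq_integral_abs_deriv_smul measurableSet_Ioi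
    (fun x _ ↦ ((hasDerivAt_neg x).exp.const_sub 1).hasDerivWithinAt)
    (fun x _ y _ h ↦ by simpa using h)]
  simp [abs_of_pos (exp_pos _)]

theorem integral_Ioo_rpow_mul_one_sub_rpow {u v : ℝ} (hu : 0 < u) (hv : 0 < v) :
    ∫ t in Ioo (0 : ℝ) 1, t ^ (u - 1) * (1 - t) ^ (v - 1) =
      Gamma u * Gamma v / Gamma (u + v) := by
  have hbeta : Complex.betaIntegral u v =
      ((∫ t in Ioo (0 : ℝ) 1, t ^ (u - 1) * (1 - t) ^ (v - 1) : ℝ) : ℂ) := by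
    rw [Complex.betaIntegral, intervalIntegral.integral_of_le zero_le_one,
      integral_Ioc_eq_integral_Ioo, ← integral_complex_ofReal]
    refine setIntegral_congr_fun measurableSet_Ioo fun t ht ↦ ?_
    rw [Complex.ofReal_mul, Complex.ofReal_cpow ht.1.le,
      Complex.ofReal_cpow (sub_nonneg.mpr ht.2.le)]
    norm_cast
  rw [← ProbabilityTheory.beta, ProbabilityTheory.beta_eq_betaIntegralReal u v hu hv, hbeta,
    Complex.ofReal_re]

theorem integral_exp_mul_exp_sub_one_rpow {a l : ℝ} (ha : a < 1) (hla : 0 < l + a) :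
    ∫ x in Ioi (0 : ℝ), exp (-l * x) * (exp x - 1) ^ (-a) =
      Gamma (1 - a) * Gamma (l + a) / Gamma (1 + l) := by
  rw [show 1 + l = (1 - a) + (l + a) by ring,
    ← integral_Ioo_rpow_mul_one_sub_rpow (sub_pos.mpr ha) hla,
    integral_Ioo_zero_one_eq_integral_Ioi]
  refine setIntegral_congr_fun measurableSet_Ioi fun x hx ↦ ?_
  have hfactor : 1 - exp (-x) = (exp x - 1) * exp (-x) := by
    rw [sub_mul, ← exp_add]; simp
  have hexp : exp (-l * x) = exp (-x) * exp (-x * -a) * exp (-x * (l + a - 1)) := by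
    rw [← exp_add, ← exp_add]; ring_nf
  rw [smul_eq_mul, sub_sub_cancel, hfactor, show 1 - a - 1 = -a by ring,
    mul_rpow (sub_nonneg.mpr (one_le_exp hx.out.le)) (exp_pos _).le, ← exp_mul, ← exp_mul, hexp]
  ring

theorem integrableOn_exp_mul_exp_sub_one_rpow {a l : ℝ} (ha : a < 1) (hla : 0 < l + a) :
    IntegrableOn (fun x ↦ exp (-l * x) * (exp x - 1) ^ (-a)) (Ioi 0) := by
  -- a non-integrable function has integral `0`, while this one has a positive integral
  refine Integrable.of_integral_ne_zero ?_
  rw [integral_exp_mul_exp_sub_one_rpow ha hla]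
  have := Gamma_pos_of_pos (sub_pos.mpr ha)
  have := Gamma_pos_of_pos hla
  have := Gamma_pos_of_pos (by linarith : 0 < 1 + l)
  positivity

theorem one_sub_exp_neg_mul_le (l : ℝ) {x : ℝ} (hx : 0 ≤ x) :
    1 - exp (-l * x) ≤ max 1 l * (1 - exp (-x)) := by
  have hs : exp (-x) ≤ 1 := exp_le_one_iff.mpr (neg_nonpos.mpr hx)
  rw [show -l * x = -x * l by ring, exp_mul]
  rcases le_total l 1 with hl1 | hl1
  · rw [max_eq_left hl1, one_mul]
    have := rpow_le_rpow_of_exponent_ge (exp_pos (-x)) hs hl1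
    rw [rpow_one] at this
    linarith
  · rw [max_eq_right hl1]
    have := one_add_mul_self_le_rpow_one_add (by linarith [exp_pos (-x)] : -1 ≤ exp (-x) - 1) hl1
    rw [add_sub_cancel] at this
    linarith

theorem exp_sub_one_rpow_le_rpow {x c : ℝ} (hx : 0 < x) (hc : c ≤ 0) :
    (exp x - 1) ^ c ≤ x ^ c :=
  rpow_le_rpow_of_nonpos hx (by linarith [add_one_le_exp x]) hc

theorem one_sub_exp_neg_mul_exp_mul_exp_sub_one_rpow {x : ℝ} (hx : 0 < x) (a : ℝ) :
    (1 - exp (-x)) * exp x * (exp x - 1) ^ (-(a + 1)) = (exp x - 1) ^ (-a) := by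
  rw [sub_mul, one_mul, ← exp_add, neg_add_cancel, exp_zero, show -a = 1 + -(a + 1) by ring,
    rpow_add (by linarith [add_one_le_exp x]), rpow_one]

theorem integrableOn_one_sub_exp_mul_exp_mul_exp_sub_one_rpow {a l : ℝ} (ha₀ : 0 < a)
    (ha₁ : a < 1) (hl : 0 ≤ l) :
    IntegrableOn (fun x ↦ (1 - exp (-l * x)) * exp x * (exp x - 1) ^ (-(a + 1))) (Ioi 0) := by
  refine Integrable.mono' ((integrableOn_exp_mul_exp_sub_one_rpow (l := 0) ha₁
    (by simpa using ha₀)).const_mul (max 1 l)) (by fun_prop) ?_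
  refine (ae_restrict_iff' measurableSet_Ioi).mpr (ae_of_all _ fun x (hx : 0 < x) ↦ ?_)
  have hu : 0 ≤ 1 - exp (-l * x) :=
    sub_nonneg.mpr (exp_le_one_iff.mpr (by nlinarith))
  have hv : 0 ≤ exp x * (exp x - 1) ^ (-(a + 1)) :=
    mul_nonneg (exp_pos x).le (rpow_nonneg (by linarith [add_one_le_exp x]) _)
  calc ‖(1 - exp (-l * x)) * exp x * (exp x - 1) ^ (-(a + 1))‖
      = (1 - exp (-l * x)) * (exp x * (exp x - 1) ^ (-(a + 1))) := by
        rw [mul_assoc, norm_of_nonneg (mul_nonneg hu hv)]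
    _ ≤ max 1 l * (1 - exp (-x)) * (exp x * (exp x - 1) ^ (-(a + 1))) :=
        mul_le_mul_of_nonneg_right (one_sub_exp_neg_mul_le l hx.le) hv
    _ = max 1 l * (exp (-0 * x) * (exp x - 1) ^ (-a)) := by
        rw [← one_sub_exp_neg_mul_exp_mul_exp_sub_one_rpow hx a, neg_zero, zero_mul, exp_zero]
        ring

theorem tendsto_one_sub_exp_mul_exp_sub_one_rpow_nhdsGT_zero {a l : ℝ} (ha₀ : 0 ≤ a)
    (ha₁ : a < 1) (hl : 0 ≤ l) :
    Tendsto (fun x ↦ (1 - exp (-l * x)) * (exp x - 1) ^ (-a)) (𝓝[>] 0) (𝓝 0) := by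
  have hbound : Tendsto (fun x : ℝ ↦ l * x ^ (1 - a)) (𝓝[>] 0) (𝓝 0) := by
    have := ((continuous_rpow_const (sub_pos.mpr ha₁).le).tendsto 0).const_mul l
    rw [zero_rpow (sub_pos.mpr ha₁).ne', mul_zero] at this
    exact this.mono_left nhdsWithin_le_nhds
  refine squeeze_zero' ?_ ?_ hbound <;> filter_upwards [self_mem_nhdsWithin] with x (hx : 0 < x)
  · have : exp (-l * x) ≤ 1 := exp_le_one_iff.mpr (by nlinarith)
    exact mul_nonneg (by linarith) (rpow_nonneg (by linarith [add_one_le_exp x]) _)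
  · calc (1 - exp (-l * x)) * (exp x - 1) ^ (-a) ≤ (l * x) * x ^ (-a) := by
          refine mul_le_mul (by linarith [add_one_le_exp (-l * x)])
            (exp_sub_one_rpow_le_rpow hx (by linarith))
            (rpow_nonneg (by linarith [add_one_le_exp x]) _) (by positivity)
      _ = l * x ^ (1 - a) := by rw [sub_eq_add_neg, rpow_add hx, rpow_one, mul_assoc]

theorem tendsto_one_sub_exp_mul_exp_sub_one_rpow_atTop {a l : ℝ} (ha : 0 < a) (hl : 0 ≤ l) :
    Tendsto (fun x ↦ (1 - exp (-l * x)) * (exp x - 1) ^ (-a)) atTop (𝓝 0) := by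
  refine isBoundedUnder_le_mul_tendsto_zero (isBoundedUnder_of_eventually_le (a := 1) ?_)
    ((tendsto_rpow_neg_atTop ha).comp (tendsto_atTop_add_const_right _ (-1) tendsto_exp_atTop))
  filter_upwards [eventually_ge_atTop 0] with x hx
  have : exp (-l * x) ≤ 1 := exp_le_one_iff.mpr (by nlinarith)
  rw [Function.comp_apply, norm_of_nonneg (by linarith)]
  linarith [exp_pos (-l * x)]

theorem integral_one_sub_exp_mul_exp_mul_exp_sub_one_rpow {a l : ℝ} (ha₀ : 0 < a) (ha₁ : a < 1)
    (hl : 0 ≤ l) :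
    ∫ x in Ioi 0, (1 - exp (-l * x)) * exp x * (exp x - 1) ^ (-(a + 1)) =
      l / a * ∫ x in Ioi 0, exp (-l * x) * (exp x - 1) ^ (-a) := by
  have hu : ∀ x ∈ Ioi (0 : ℝ), HasDerivAt (fun x ↦ 1 - exp (-l * x)) (l * exp (-l * x)) x := by
    intro x _
    refine (((hasDerivAt_id x).const_mul (-l)).exp.const_sub 1).congr_deriv ?_
    simp only [id_eq, neg_mul, mul_one, mul_neg, neg_neg]
    ring
  have hv : ∀ x ∈ Ioi (0 : ℝ), HasDerivAt (fun x ↦ -a⁻¹ * (exp x - 1) ^ (-a))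
      (exp x * (exp x - 1) ^ (-(a + 1))) x := by
    intro x (hx : 0 < x)
    have hpos : 0 < exp x - 1 := by linarith [add_one_le_exp x]
    refine ((((hasDerivAt_exp x).sub_const 1).rpow_const (p := -a) (Or.inl hpos.ne')).const_mul
      (-a⁻¹)).congr_deriv ?_
    rw [show -a - 1 = -(a + 1) by ring]
    field_simp
  have hlim : ∀ f : Filter ℝ,
      Tendsto (fun x ↦ (1 - exp (-l * x)) * (exp x - 1) ^ (-a)) f (𝓝 0) →
      Tendsto (fun x ↦ (1 - exp (-l * x)) * (-a⁻¹ * (exp x - 1) ^ (-a))) f (𝓝 0) := by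
    intro f hf
    simpa only [mul_zero, mul_left_comm (-a⁻¹)] using hf.const_mul (-a⁻¹)
  have h_zero := hlim _ (tendsto_one_sub_exp_mul_exp_sub_one_rpow_nhdsGT_zero ha₀.le ha₁ hl)
  have h_infty := hlim _ (tendsto_one_sub_exp_mul_exp_sub_one_rpow_atTop ha₀ hl)
  have huv' : IntegrableOn (fun x ↦ (1 - exp (-l * x)) * (exp x * (exp x - 1) ^ (-(a + 1))))
      (Ioi 0) := by
    simpa only [mul_assoc] using integrableOn_one_sub_exp_mul_exp_mul_exp_sub_one_rpow ha₀ ha₁ hl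
  have hu'v : IntegrableOn (fun x ↦ l * exp (-l * x) * (-a⁻¹ * (exp x - 1) ^ (-a))) (Ioi 0) := by
    refine IntegrableOn.congr_fun ((integrableOn_exp_mul_exp_sub_one_rpow ha₁
      (by linarith)).const_mul (-(l / a))) (fun x _ ↦ by ring) measurableSet_Ioi
  simp only [mul_assoc]
  rw [integral_Ioi_mul_deriv_eq_deriv_mul hu hv huv' hu'v h_zero h_infty, sub_self,
    zero_sub, ← integral_neg, ← integral_const_mul]
  congr 1 with x
  ring

theorem ascending_ladder_laplace_exponent_small_alpha
    (a : ℝ) (ha : a ∈ Set.Ioo (0:ℝ) 1) (lam : ℝ) (hlam : 0 ≤ lam) :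
    -(Real.Gamma (-a))⁻¹ *
      ∫ x in Set.Ioi (0:ℝ),
        (1 - Real.exp (-lam * x)) * Real.exp x * (Real.exp x - 1) ^ (-(a + 1)) =
    Real.Gamma (a + lam) / Real.Gamma lam := by
  obtain ⟨ha₀, ha₁⟩ := ha
  rcases hlam.eq_or_lt with rfl | hlam₀
  · simp [Gamma_zero]
  have hΓ₁ : Gamma (1 - a) = -a * Gamma (-a) := by
    rw [sub_eq_neg_add, Gamma_add_one (neg_ne_zero.mpr ha₀.ne')]
  have hΓ₂ : Gamma (1 + lam) = lam * Gamma lam := by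
    rw [add_comm, Gamma_add_one hlam₀.ne']
  have hΓ₁_pos := Gamma_pos_of_pos (sub_pos.mpr ha₁)
  have hΓ_neg : Gamma (-a) ≠ 0 := fun h ↦ by
    rw [h, mul_zero] at hΓ₁; exact hΓ₁_pos.ne' hΓ₁
  have hΓ_lam := Gamma_pos_of_pos hlam₀
  rw [integral_one_sub_exp_mul_exp_mul_exp_sub_one_rpow ha₀ ha₁ hlam,
    integral_exp_mul_exp_sub_one_rpow ha₁ (by linarith), hΓ₁, hΓ₂, add_comm a lam]
  field_simp
end

section
/- Let α ∈ (0,1], ρ ∈ (0,1), ρ̂ = 1−ρ with αρ̂ ∈ (0,1). For every λ ≥ 0, Γ(1−αρ)/Γ(1−α) + (−1/Γ(−αρ̂))·∫_0^∞ (1−e^{−λx}) e^{αx} (e^{x}−1)^{−(αρ̂+1)} dx = Γ(1−αρ+λ)/Γ(1−α+λ), where in the case α = 1 the term Γ(1−αρ)/Γ(1−α) is interpreted as 0 (convention 1/Γ(0) = 0). -/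
/-!
Put `a = 1 - αρ` and `b = αρ̂`, so that `a - b = 1 - α`. The substitution `t = e^{-x}` turns the
integral into `K(a) = ∫₀¹ t^{a-1} (1 - t^λ) (1 - t)^{-b-1} dt`, formally the difference of Beta
values `B(a, -b) - B(a + λ, -b) = Γ(-b) (Γ(a)/Γ(a-b) - Γ(a+λ)/Γ(a+λ-b))`; neither Beta integral
converges, since `-b < 0`. Writing `1 = (1 - t) + t` in the integrand gives
`K(a) - K(a+1) = B(a, 1-b) - B(a+λ, 1-b)`, and the Gamma expression satisfies the same recurrence,
so their difference is `1`-periodic in `a`. Along `a + ℕ` it tends to `0`: `K(a+n) → 0` by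
dominated convergence, and the Gamma expression does too because log-convexity of `Γ` makes
`x ↦ Γ(x)/Γ(x-b)` monotone, which bounds its `λ`-increment by its `⌈λ⌉`-increment, a finite sum
of Beta values `B(x+k, 1-b) → 0`.
-/

open MeasureTheory Set Filter Real
open scoped Topology

theorem ConvexOn.map_add_sub_map_le {𝕜 : Type*} [Field 𝕜] [LinearOrder 𝕜] [IsStrictOrderedRing 𝕜]
    {s : Set 𝕜} {f : 𝕜 → 𝕜} (hf : ConvexOn 𝕜 s f) {x y h : 𝕜}
    (hx : x ∈ s) (hxh : x + h ∈ s) (hy : y ∈ s) (hyh : y + h ∈ s) (hh : 0 < h) (hxy : x ≤ y) :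
    f (x + h) - f x ≤ f (y + h) - f y := by
  -- slope on `[x, x + h]` ≤ slope on `[x, y + h]` ≤ slope on `[y, y + h]`
  have h₁ := hf.secant_mono hx hxh hyh (by linarith) (by linarith) (by linarith)
  have h₂ := hf.secant_mono hyh hx hy (by linarith) (by linarith) hxy
  rw [add_sub_cancel_left] at h₁
  rw [show y - (y + h) = -h by ring, div_neg, ← neg_div, neg_sub, ← neg_div_neg_eq, neg_sub,
    neg_sub] at h₂
  have h₃ := h₁.trans h₂
  rwa [div_le_div_iff_of_pos_right hh] at h₃

private lemma ofReal_cpow_mul_one_sub_cpow {p q t : ℝ} (ht : t ∈ Ioo (0:ℝ) 1) :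
    (t:ℂ) ^ ((p:ℂ) - 1) * (1 - (t:ℂ)) ^ ((q:ℂ) - 1)
      = ((t ^ (p - 1) * (1 - t) ^ (q - 1) : ℝ) : ℂ) := by
  rw [show (p:ℂ) - 1 = ((p - 1 : ℝ) : ℂ) by push_cast; ring,
    show (q:ℂ) - 1 = ((q - 1 : ℝ) : ℂ) by push_cast; ring,
    show 1 - (t:ℂ) = ((1 - t : ℝ) : ℂ) by push_cast; ring,
    ← Complex.ofReal_cpow ht.1.le, ← Complex.ofReal_cpow (by linarith [ht.2] : (0:ℝ) ≤ 1 - t)]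
  push_cast; ring

lemma integrableOn_rpow_mul_one_sub_rpow {p q : ℝ} (hp : 0 < p) (hq : 0 < q) :
    IntegrableOn (fun t : ℝ => t ^ (p - 1) * (1 - t) ^ (q - 1)) (Ioo 0 1) := by
  have h := Complex.betaIntegral_convergent (u := p) (v := q) (by simpa) (by simpa)
  rw [intervalIntegrable_iff_integrableOn_Ioc_of_le zero_le_one] at h
  refine (h.mono_set Ioo_subset_Ioc_self).re.congr ?_
  filter_upwards [ae_restrict_mem measurableSet_Ioo] with t ht
  simp [ofReal_cpow_mul_one_sub_cpow ht]

lemma integral_rpow_mul_one_sub_rpow {p q : ℝ} (hp : 0 < p) (hq : 0 < q) :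
    ∫ t in Ioo (0:ℝ) 1, t ^ (p - 1) * (1 - t) ^ (q - 1) = Gamma p * Gamma q / Gamma (p + q) := by
  have hB : Complex.betaIntegral p q
      = ((∫ t in Ioo (0:ℝ) 1, t ^ (p - 1) * (1 - t) ^ (q - 1) : ℝ) : ℂ) := by
    rw [Complex.betaIntegral, intervalIntegral.integral_of_le zero_le_one,
      integral_Ioc_eq_integral_Ioo,
      setIntegral_congr_fun measurableSet_Ioo (fun t ht => ofReal_cpow_mul_one_sub_cpow ht)]
    exact integral_ofReal
  have hG := Complex.Gamma_mul_Gamma_eq_betaIntegral (s := p) (t := q) (by simpa) (by simpa)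
  rw [hB, ← Complex.ofReal_add, Complex.Gamma_ofReal, Complex.Gamma_ofReal,
    Complex.Gamma_ofReal, ← Complex.ofReal_mul, ← Complex.ofReal_mul, Complex.ofReal_inj] at hG
  rw [hG, mul_div_cancel_left₀ _ (Gamma_pos_of_pos (add_pos hp hq)).ne']

lemma tendsto_integral_rpow_add_nat_mul {x : ℝ} {g : ℝ → ℝ}
    (hg : IntegrableOn (fun t => t ^ (x - 1) * g t) (Ioo 0 1)) :
    Tendsto (fun n : ℕ => ∫ t in Ioo (0:ℝ) 1, t ^ (x + n - 1) * g t) atTop (𝓝 0) := by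
  have hpow : ∀ n : ℕ, ∀ t ∈ Ioo (0:ℝ) 1, t ^ (x + n - 1) * g t = t ^ n * (t ^ (x - 1) * g t) :=
    fun n t ht => by
      rw [show x + n - 1 = (x - 1) + n by ring, rpow_add_natCast ht.1.ne']; ring
  have hlim := tendsto_integral_of_dominated_convergence (μ := volume.restrict (Ioo (0:ℝ) 1))
    (F := fun (n : ℕ) t => t ^ n * (t ^ (x - 1) * g t)) (f := fun _ => 0) _
    (fun n => (continuous_pow n).aestronglyMeasurable.mul hg.aestronglyMeasurable) hg.norm
    (fun n => by
      filter_upwards [ae_restrict_mem measurableSet_Ioo] with t ht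
      rw [norm_mul, norm_pow, Real.norm_of_nonneg ht.1.le]
      exact mul_le_of_le_one_left (norm_nonneg _) (pow_le_one₀ ht.1.le ht.2.le))
    (by
      filter_upwards [ae_restrict_mem measurableSet_Ioo] with t ht
      simpa using
        (tendsto_pow_atTop_nhds_zero_of_lt_one ht.1.le ht.2).mul_const (t ^ (x - 1) * g t))
  rw [integral_zero] at hlim
  exact hlim.congr fun n => (setIntegral_congr_fun measurableSet_Ioo (hpow n)).symm

noncomputable def gammaRatio (b x : ℝ) : ℝ := Gamma x / Gamma (x - b)

lemma gammaRatio_le_gammaRatio {b x y : ℝ} (hb : 0 < b) (hbx : b < x) (hxy : x ≤ y) :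
    gammaRatio b x ≤ gammaRatio b y := by
  have hlog : ∀ z, b < z → gammaRatio b z = exp (log (Gamma z) - log (Gamma (z - b))) :=
    fun z hz => by
      rw [exp_sub, exp_log (Gamma_pos_of_pos (by linarith)),
        exp_log (Gamma_pos_of_pos (by linarith)), gammaRatio]
  have hconv := convexOn_log_Gamma.map_add_sub_map_le (x := x - b) (y := y - b) (h := b)
    (by simp; linarith) (by simp; linarith) (by simp; linarith) (by simp; linarith) hb
    (by linarith)
  simp only [Function.comp, sub_add_cancel] at hconv
  rw [hlog x hbx, hlog y (by linarith)]
  exact exp_le_exp.mpr hconv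

lemma gammaRatio_add_one_sub {b x : ℝ} (hb : 0 < b) (hbx : b ≤ x) :
    gammaRatio b (x + 1) - gammaRatio b x = b * (Gamma x / Gamma (x + (1 - b))) := by
  rcases hbx.eq_or_lt with rfl | hbx
  -- Lean's `Γ 0 = 0` makes `gammaRatio b b = 0`, which is the convention `1 / Γ(0) = 0`.
  · simp [gammaRatio, Gamma_add_one hb.ne']
  · have hxb : 0 < x - b := by linarith
    have hΓ : Gamma (x - b) ≠ 0 := (Gamma_pos_of_pos hxb).ne'
    rw [gammaRatio, gammaRatio, show x + 1 - b = (x - b) + 1 by ring,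
      show x + (1 - b) = (x - b) + 1 by ring, Gamma_add_one hxb.ne',
      Gamma_add_one (by linarith : x ≠ 0)]
    field_simp
    ring

lemma tendsto_Gamma_add_nat_div_Gamma_add_nat_add {x q : ℝ} (hx : 0 < x) (hq : 0 < q) :
    Tendsto (fun n : ℕ => Gamma (x + n) / Gamma (x + n + q)) atTop (𝓝 0) := by
  have hint := (tendsto_integral_rpow_add_nat_mul (g := fun t => (1 - t) ^ (q - 1))
    (integrableOn_rpow_mul_one_sub_rpow hx hq)).div_const (Gamma q)
  rw [zero_div] at hint
  refine hint.congr fun n => ?_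
  rw [integral_rpow_mul_one_sub_rpow (by positivity) hq]
  field_simp [(Gamma_pos_of_pos hq).ne']

lemma tendsto_gammaRatio_add_sub {a b lam : ℝ} (ha : 0 < a) (hb0 : 0 < b) (hb1 : b < 1)
    (hlam : 0 ≤ lam) :
    Tendsto (fun n : ℕ => gammaRatio b (a + n + lam) - gammaRatio b (a + n)) atTop (𝓝 0) := by
  set m := ⌈lam⌉₊
  have hupper : Tendsto (fun n : ℕ => ∑ k ∈ Finset.range m,
      b * (Gamma (a + k + n) / Gamma (a + k + n + (1 - b)))) atTop (𝓝 0) := by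
    simpa using tendsto_finsetSum (Finset.range m) fun k _ =>
      (tendsto_Gamma_add_nat_div_Gamma_add_nat_add (x := a + k) (by positivity)
        (by linarith : 0 < 1 - b)).const_mul b
  refine tendsto_of_tendsto_of_tendsto_of_le_of_le' tendsto_const_nhds hupper ?_ ?_
  · filter_upwards [eventually_ge_atTop 1] with n hn
    have : (1:ℝ) ≤ n := by exact_mod_cast hn
    exact sub_nonneg.mpr (gammaRatio_le_gammaRatio hb0 (by linarith) (by linarith))
  · filter_upwards [eventually_ge_atTop 1] with n hn
    have : (1:ℝ) ≤ n := by exact_mod_cast hn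
    have htele : ∑ k ∈ Finset.range m, b * (Gamma (a + k + n) / Gamma (a + k + n + (1 - b)))
        = gammaRatio b (a + n + m) - gammaRatio b (a + n) := by
      have h := Finset.sum_range_sub (fun k : ℕ => gammaRatio b (a + n + k)) m
      rw [Nat.cast_zero, add_zero] at h
      rw [← h]
      refine Finset.sum_congr rfl fun k _ => ?_
      rw [Nat.cast_add_one, ← add_assoc,
        gammaRatio_add_one_sub hb0 (by linarith [k.cast_nonneg (α := ℝ)]),
        show a + n + k = a + k + n by ring]
    rw [htele]
    exact sub_le_sub_right
      (gammaRatio_le_gammaRatio hb0 (by linarith) (by linarith [Nat.le_ceil lam])) _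

lemma one_sub_rpow_le_max_mul {lam t : ℝ} (ht : t ∈ Ioo (0:ℝ) 1) :
    1 - t ^ lam ≤ max 1 lam * (1 - t) := by
  rcases le_total lam 1 with hlam1 | hlam1
  · have := rpow_le_rpow_of_exponent_ge ht.1 ht.2.le hlam1
    rw [rpow_one] at this
    nlinarith [le_max_left 1 lam, ht.2]
  · have := one_add_mul_self_le_rpow_one_add (by linarith [ht.1] : (-1:ℝ) ≤ t - 1) hlam1
    rw [add_sub_cancel] at this
    nlinarith [le_max_right 1 lam, ht.2]

-- Formally `B(x, -b) - B(x + lam, -b)`; the two Beta integrals diverge separately.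
noncomputable def betaDiffIntegral (b lam x : ℝ) : ℝ :=
  ∫ t in Ioo (0:ℝ) 1, t ^ (x - 1) * ((1 - t ^ lam) * (1 - t) ^ (-b - 1))

section betaDiffIntegral

variable {b lam : ℝ}

lemma integrableOn_betaDiffIntegral_integrand {x : ℝ} (hlam : 0 ≤ lam) (hb : b < 1) (hx : 0 < x) :
    IntegrableOn (fun t : ℝ => t ^ (x - 1) * ((1 - t ^ lam) * (1 - t) ^ (-b - 1))) (Ioo 0 1) := by
  refine ((integrableOn_rpow_mul_one_sub_rpow hx (by linarith : 0 < 1 - b)).const_mul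
    (max 1 lam)).mono' (by fun_prop) ?_
  filter_upwards [ae_restrict_mem measurableSet_Ioo] with t ht
  have h1t : 0 < 1 - t := by linarith [ht.2]
  have hdom : (1 - t ^ lam) * (1 - t) ^ (-b - 1) ≤ max 1 lam * (1 - t) ^ (1 - b - 1) := by
    rw [show 1 - b - 1 = 1 + (-b - 1) by ring, rpow_add h1t, rpow_one, ← mul_assoc]
    exact mul_le_mul_of_nonneg_right (one_sub_rpow_le_max_mul ht) (by positivity)
  rw [norm_mul, norm_of_nonneg (rpow_nonneg ht.1.le _), norm_of_nonneg (mul_nonneg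
    (sub_nonneg.mpr (rpow_le_one ht.1.le ht.2.le hlam)) (rpow_nonneg h1t.le _))]
  calc t ^ (x - 1) * ((1 - t ^ lam) * (1 - t) ^ (-b - 1))
      ≤ t ^ (x - 1) * (max 1 lam * (1 - t) ^ (1 - b - 1)) :=
        mul_le_mul_of_nonneg_left hdom (rpow_nonneg ht.1.le _)
    _ = _ := by ring

lemma betaDiffIntegral_eq_add {x : ℝ} (hlam : 0 ≤ lam) (hb : b < 1) (hx : 0 < x) :
    betaDiffIntegral b lam x = Gamma (1 - b) * (Gamma x / Gamma (x + (1 - b))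
      - Gamma (x + lam) / Gamma (x + lam + (1 - b))) + betaDiffIntegral b lam (x + 1) := by
  have hq : 0 < 1 - b := by linarith
  have hsplit : ∀ t ∈ Ioo (0:ℝ) 1, t ^ (x - 1) * ((1 - t ^ lam) * (1 - t) ^ (-b - 1))
      = (t ^ (x - 1) * (1 - t) ^ (1 - b - 1) - t ^ (x + lam - 1) * (1 - t) ^ (1 - b - 1))
        + t ^ (x + 1 - 1) * ((1 - t ^ lam) * (1 - t) ^ (-b - 1)) := by
    intro t ht
    rw [show x + lam - 1 = (x - 1) + lam by ring, rpow_add ht.1,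
      show x + 1 - 1 = (x - 1) + 1 by ring, rpow_add_one ht.1.ne',
      show 1 - b - 1 = 1 + (-b - 1) by ring, rpow_add (by linarith [ht.2]), rpow_one]
    ring
  have hB₁ := integrableOn_rpow_mul_one_sub_rpow hx hq
  have hB₂ := integrableOn_rpow_mul_one_sub_rpow (by linarith : 0 < x + lam) hq
  have hB : IntegrableOn (fun t : ℝ => t ^ (x - 1) * (1 - t) ^ (1 - b - 1)
      - t ^ (x + lam - 1) * (1 - t) ^ (1 - b - 1)) (Ioo 0 1) := hB₁.sub hB₂
  rw [betaDiffIntegral, setIntegral_congr_fun measurableSet_Ioo hsplit,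
    integral_add hB (integrableOn_betaDiffIntegral_integrand hlam hb (by linarith)),
    integral_sub hB₁ hB₂, integral_rpow_mul_one_sub_rpow hx hq,
    integral_rpow_mul_one_sub_rpow (by linarith) hq, betaDiffIntegral]
  ring

lemma tendsto_betaDiffIntegral_add_nat {a : ℝ} (hlam : 0 ≤ lam) (hb : b < 1) (ha : 0 < a) :
    Tendsto (fun n : ℕ => betaDiffIntegral b lam (a + n)) atTop (𝓝 0) :=
  tendsto_integral_rpow_add_nat_mul (integrableOn_betaDiffIntegral_integrand hlam hb ha)

theorem betaDiffIntegral_eq {a : ℝ} (hb0 : 0 < b) (hb1 : b < 1) (hba : b ≤ a) (hlam : 0 ≤ lam) :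
    betaDiffIntegral b lam a = Gamma (-b) * (gammaRatio b a - gammaRatio b (a + lam)) := by
  have ha : 0 < a := by linarith
  have hΓ : Gamma (1 - b) = -b * Gamma (-b) := by
    rw [show 1 - b = -b + 1 by ring, Gamma_add_one (by linarith)]
  have hperiodic : ∀ x, b ≤ x →
      betaDiffIntegral b lam (x + 1)
          - Gamma (-b) * (gammaRatio b (x + 1) - gammaRatio b (x + 1 + lam))
        = betaDiffIntegral b lam x - Gamma (-b) * (gammaRatio b x - gammaRatio b (x + lam)) := by
    intro x hx
    rw [betaDiffIntegral_eq_add (x := x) hlam hb1 (by linarith), hΓ, add_right_comm x 1 lam]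
    linear_combination Gamma (-b) * (gammaRatio_add_one_sub hb0 (by linarith : b ≤ x + lam)
      - gammaRatio_add_one_sub hb0 hx)
  have hconst : ∀ n : ℕ, betaDiffIntegral b lam (a + n)
      - Gamma (-b) * (gammaRatio b (a + n) - gammaRatio b (a + n + lam))
      = betaDiffIntegral b lam a - Gamma (-b) * (gammaRatio b a - gammaRatio b (a + lam)) := by
    intro n
    induction n with
    | zero => simp
    | succ n ih =>
      rw [Nat.cast_add_one, ← add_assoc, hperiodic _ (by linarith [n.cast_nonneg (α := ℝ)]), ih]
  have hlim := (tendsto_betaDiffIntegral_add_nat hlam hb1 ha).add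
    ((tendsto_gammaRatio_add_sub ha hb0 hb1 hlam).const_mul (Gamma (-b)))
  rw [mul_zero, add_zero] at hlim
  have hD : Tendsto (fun _ : ℕ => betaDiffIntegral b lam a
      - Gamma (-b) * (gammaRatio b a - gammaRatio b (a + lam))) atTop (𝓝 0) :=
    hlim.congr fun n => by linear_combination hconst n
  linarith [tendsto_nhds_unique hD tendsto_const_nhds]

end betaDiffIntegral

lemma integral_Ioo_zero_one_eq_integral_comp_exp_neg (f : ℝ → ℝ) :
    ∫ t in Ioo (0:ℝ) 1, f t = ∫ x in Ioi (0:ℝ), exp (-x) * f (exp (-x)) := by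
  have himage : (fun x : ℝ => exp (-x)) '' Ioi 0 = Ioo 0 1 := by
    ext t
    constructor
    · rintro ⟨x, hx, rfl⟩
      exact ⟨exp_pos _, exp_lt_one_iff.mpr (neg_lt_zero.mpr hx)⟩
    · rintro ⟨ht0, ht1⟩
      exact ⟨-log t, neg_pos.mpr (log_neg ht0 ht1), by simp [exp_log ht0]⟩
  have h := integral_image_eq_integral_abs_deriv_smul (measurableSet_Ioi (a := 0))
    (fun x _ => ((hasDerivAt_neg x).exp).hasDerivWithinAt)
    (fun u _ v _ huv => neg_injective (exp_injective huv)) f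
  rw [himage] at h
  simpa [abs_of_pos (exp_pos _)] using h

lemma integral_exp_mul_exp_sub_one_rpow_eq_betaDiffIntegral (b lam c : ℝ) :
    ∫ x in Ioi (0:ℝ), (1 - exp (-lam * x)) * exp (c * x) * (exp x - 1) ^ (-(b + 1))
      = betaDiffIntegral b lam (b + 1 - c) := by
  rw [betaDiffIntegral, integral_Ioo_zero_one_eq_integral_comp_exp_neg]
  refine setIntegral_congr_fun measurableSet_Ioi fun x hx => ?_
  have hexp : ∀ r : ℝ, exp (-x) ^ r = exp (-r * x) := fun r => by
    rw [← exp_mul]; ring_nf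
  have hfactor : 1 - exp (-x) = exp (-x) * (exp x - 1) := by
    rw [mul_sub, ← exp_add]; simp
  rw [hexp, hexp, hfactor, mul_rpow (exp_pos _).le (sub_nonneg.mpr (one_le_exp (le_of_lt hx))),
    hexp, show -b - 1 = -(b + 1) by ring,
    show exp (c * x) = exp (-x) * exp (-(b + 1 - c - 1) * x) * exp (-(-(b + 1)) * x) by
      rw [← exp_add, ← exp_add]; ring_nf]
  ring

theorem descending_ladder_laplace_exponent_small_alpha_general
    (α ρ : ℝ) (hα : α ∈ Set.Ioc (0:ℝ) 1)
    (h : α * (1 - ρ) ∈ Set.Ioo (0:ℝ) 1) (lam : ℝ) (hlam : 0 ≤ lam) :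
    Real.Gamma (1 - α * ρ) / Real.Gamma (1 - α) +
      -(Real.Gamma (-(α * (1 - ρ))))⁻¹ *
        ∫ x in Set.Ioi (0:ℝ),
          (1 - Real.exp (-lam * x)) * Real.exp (α * x) *
            (Real.exp x - 1) ^ (-(α * (1 - ρ) + 1)) =
    Real.Gamma (1 - α * ρ + lam) / Real.Gamma (1 - α + lam) := by
  obtain ⟨hb0, hb1⟩ := h
  have hΓ : Gamma (-(α * (1 - ρ))) ≠ 0 := Gamma_ne_zero fun m hm => by
    rcases m with _ | m
    · simp only [Nat.cast_zero, neg_zero, neg_eq_zero] at hm; linarith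
    · push_cast at hm; linarith [m.cast_nonneg (α := ℝ)]
  rw [integral_exp_mul_exp_sub_one_rpow_eq_betaDiffIntegral,
    show α * (1 - ρ) + 1 - α = 1 - α * ρ by ring,
    betaDiffIntegral_eq hb0 hb1 (by linarith [hα.2]) hlam, gammaRatio, gammaRatio,
    show 1 - α * ρ - α * (1 - ρ) = 1 - α by ring,
    show 1 - α * ρ + lam - α * (1 - ρ) = 1 - α + lam by ring]
  field_simp
  ring

theorem descending_ladder_laplace_exponent_small_alpha
    (α ρ : ℝ) (hα : α ∈ Set.Ioc (0:ℝ) 1) (hρ : ρ ∈ Set.Ioo (0:ℝ) 1)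
    (h : α * (1 - ρ) ∈ Set.Ioo (0:ℝ) 1) (lam : ℝ) (hlam : 0 ≤ lam) :
    Real.Gamma (1 - α * ρ) / Real.Gamma (1 - α) +
      -(Real.Gamma (-(α * (1 - ρ))))⁻¹ *
        ∫ x in Set.Ioi (0:ℝ),
          (1 - Real.exp (-lam * x)) * Real.exp (α * x) *
            (Real.exp x - 1) ^ (-(α * (1 - ρ) + 1)) =
    Real.Gamma (1 - α * ρ + lam) / Real.Gamma (1 - α + lam) :=
  descending_ladder_laplace_exponent_small_alpha_general α ρ hα h lam hlam
end
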